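/- arXiv:0903.0657 — 8 statements merged into one kernel-verified Lean document; each statement's English description precedes it below -/
import Mathlib

section
/- Let $n \geq 1$, let $c_1,\dots,c_n \geq 0$ be real numbers, and for each nonempty $A \subseteq \{1,\dots,n\}$ let $\alpha_A \geq 0$ be a real number. Assume that for every nonempty $A \subseteq \{1,\dots,n\}$ we have $\sum_{B : B \cap A \neq \emptyset} \alpha_B > \sum_{i \in A} c_i$. Then for every nonempty $A \subseteq \{1,\dots,n\}$ there exist real numbers $\beta_{A,i} \geq 0$ for $i \in A$ such that $\sum_{i \in A} \beta_{A,i} = \alpha_A$, and moreover for every $i \in \{1,\dots,n\}$ we have $\sum_{A \ni i} \beta_{A,i} > c_i$. -/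
open Finset


lemma hall_int (n : ℕ) (a : Finset (Fin n) → ℕ) (m : Fin n → ℕ)
    (hcond : ∀ S : Finset (Fin n), S.Nonempty →
      ∑ i ∈ S, m i ≤ ∑ B ∈ Finset.univ.filter fun B : Finset (Fin n) => (B ∩ S).Nonempty, a B) :
    ∃ nn : Finset (Fin n) → Fin n → ℕ,
      (∀ B i, nn B i ≠ 0 → i ∈ B) ∧
      (∀ B, ∑ i ∈ B, nn B i ≤ a B) ∧
      (∀ i, m i ≤ ∑ B ∈ Finset.univ.filter fun B : Finset (Fin n) => i ∈ B, nn B i) := by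
  classical
  set t : (Σ i : Fin n, Fin (m i)) → Finset (Σ B : Finset (Fin n), Fin (a B)) :=
    fun u => Finset.univ.filter (fun v => u.1 ∈ v.1) with ht
  have hall : ∀ s : Finset (Σ i : Fin n, Fin (m i)), s.card ≤ (s.biUnion t).card := by
    intro s
    rcases s.eq_empty_or_nonempty with hs | hs
    · subst hs; simp
    set S : Finset (Fin n) := s.image Sigma.fst with hS
    have hSne : S.Nonempty := hs.image _
    have h1 : s.card ≤ ∑ i ∈ S, m i := by
      have : s ⊆ S.sigma (fun i => Finset.univ) := by
        intro u hu
        simp only [Finset.mem_sigma, Finset.mem_univ, and_true]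
        exact Finset.mem_image_of_mem _ hu
      calc s.card ≤ (S.sigma (fun i => Finset.univ)).card := Finset.card_le_card this
        _ = ∑ i ∈ S, m i := by simp [Finset.card_sigma]
    have h2 : (Finset.univ.filter (fun v : Σ B : Finset (Fin n), Fin (a B) =>
        (v.1 ∩ S).Nonempty)) ⊆ s.biUnion t := by
      intro v hv
      simp only [Finset.mem_filter] at hv
      obtain ⟨i, hi⟩ := hv.2
      rw [Finset.mem_inter] at hi
      obtain ⟨u, hu, hui⟩ := Finset.mem_image.mp hi.2
      exact Finset.mem_biUnion.mpr ⟨u, hu, by simp [ht, hui, hi.1]⟩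
    have h3 : (Finset.univ.filter (fun v : Σ B : Finset (Fin n), Fin (a B) =>
        (v.1 ∩ S).Nonempty)).card
        = ∑ B ∈ Finset.univ.filter (fun B : Finset (Fin n) => (B ∩ S).Nonempty), a B := by
      have heq : Finset.univ.filter (fun v : Σ B : Finset (Fin n), Fin (a B) =>
          (v.1 ∩ S).Nonempty)
          = (Finset.univ.filter (fun B : Finset (Fin n) => (B ∩ S).Nonempty)).sigma
            (fun B => Finset.univ) := by
        ext v
        simp [Finset.mem_sigma]
      rw [heq, Finset.card_sigma]
      simp
    calc s.card ≤ ∑ i ∈ S, m i := h1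
      _ ≤ ∑ B ∈ Finset.univ.filter (fun B : Finset (Fin n) => (B ∩ S).Nonempty), a B :=
          hcond S hSne
      _ = _ := h3.symm
      _ ≤ (s.biUnion t).card := Finset.card_le_card h2
  obtain ⟨f, hfinj, hft⟩ := (Finset.all_card_le_biUnion_card_iff_exists_injective t).mp hall
  have hmem : ∀ u : Σ i : Fin n, Fin (m i), u.1 ∈ (f u).1 := by
    intro u
    have := hft u
    simpa [ht] using this
  refine ⟨fun B i => (Finset.univ.filter fun u : Σ i : Fin n, Fin (m i) =>
    (f u).1 = B ∧ u.1 = i).card, ?_, ?_, ?_⟩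
  · intro B i hne
    obtain ⟨u, hu⟩ := Finset.card_pos.mp (Nat.pos_of_ne_zero hne)
    simp only [Finset.mem_filter] at hu
    have := hmem u
    rw [hu.2.1, hu.2.2] at this
    exact this
  · intro B
    have hsum : ∑ i ∈ (Finset.univ : Finset (Fin n)),
        (Finset.univ.filter fun u : Σ i : Fin n, Fin (m i) => (f u).1 = B ∧ u.1 = i).card
        = (Finset.univ.filter fun u : Σ i : Fin n, Fin (m i) => (f u).1 = B).card := by
      rw [Finset.card_eq_sum_card_fiberwise (f := Sigma.fst)
        (t := (Finset.univ : Finset (Fin n))) (fun x _ => Finset.mem_univ _)]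
      apply Finset.sum_congr rfl
      intro i _
      congr 1
      rw [Finset.filter_filter]
    have hle : (Finset.univ.filter fun u : Σ i : Fin n, Fin (m i) => (f u).1 = B).card
        ≤ a B := by
      have hmaps : ∀ u ∈ (Finset.univ.filter fun u : Σ i : Fin n, Fin (m i) => (f u).1 = B),
          ((f u).2 : ℕ) ∈ Finset.range (a B) := by
        intro u hu
        simp only [Finset.mem_filter] at hu
        rw [Finset.mem_range, ← hu.2]
        exact (f u).2.isLt
      have hinj : ∀ u ∈ (Finset.univ.filter fun u : Σ i : Fin n, Fin (m i) => (f u).1 = B),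
          ∀ u' ∈ (Finset.univ.filter fun u : Σ i : Fin n, Fin (m i) => (f u).1 = B),
          ((f u).2 : ℕ) = ((f u').2 : ℕ) → u = u' := by
        intro u hu u' hu' heq
        simp only [Finset.mem_filter] at hu hu'
        apply hfinj
        apply Sigma.ext
        · rw [hu.2, hu'.2]
        · rw [Fin.heq_ext_iff]
          · exact heq
          · rw [hu.2, hu'.2]
      calc (Finset.univ.filter fun u : Σ i : Fin n, Fin (m i) => (f u).1 = B).card
          ≤ (Finset.range (a B)).card := Finset.card_le_card_of_injOn _ hmaps hinj
        _ = a B := Finset.card_range _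
    calc ∑ i ∈ B, (Finset.univ.filter fun u : Σ i : Fin n, Fin (m i) =>
          (f u).1 = B ∧ u.1 = i).card
        ≤ ∑ i ∈ (Finset.univ : Finset (Fin n)),
          (Finset.univ.filter fun u : Σ i : Fin n, Fin (m i) => (f u).1 = B ∧ u.1 = i).card :=
          Finset.sum_le_sum_of_subset (Finset.subset_univ _)
      _ = _ := hsum
      _ ≤ a B := hle
  · intro i
    have htotal : ∑ B ∈ (Finset.univ : Finset (Finset (Fin n))),
        (Finset.univ.filter fun u : Σ i : Fin n, Fin (m i) => (f u).1 = B ∧ u.1 = i).card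
        = (Finset.univ.filter fun u : Σ i : Fin n, Fin (m i) => u.1 = i).card := by
      rw [Finset.card_eq_sum_card_fiberwise (f := fun u => (f u).1)
        (t := (Finset.univ : Finset (Finset (Fin n)))) (fun x _ => Finset.mem_univ _)]
      apply Finset.sum_congr rfl
      intro B _
      congr 1
      rw [Finset.filter_filter]
      apply Finset.filter_congr
      intro u _
      tauto
    have hcard : (Finset.univ.filter fun u : Σ i : Fin n, Fin (m i) => u.1 = i).card = m i := by
      have heq : (Finset.univ.filter fun u : Σ i : Fin n, Fin (m i) => u.1 = i)
          = ({i} : Finset (Fin n)).sigma (fun _ => Finset.univ) := by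
        ext u
        simp [Finset.mem_sigma]
      rw [heq, Finset.card_sigma]
      simp
    have hzero : ∀ B : Finset (Fin n), i ∉ B →
        (Finset.univ.filter fun u : Σ i : Fin n, Fin (m i) => (f u).1 = B ∧ u.1 = i).card = 0 := by
      intro B hiB
      rw [Finset.card_eq_zero, Finset.filter_eq_empty_iff]
      rintro u _ ⟨h1, h2⟩
      exact hiB (by rw [← h1, ← h2]; exact hmem u)
    rw [← hcard, ← htotal]
    rw [Finset.sum_filter]
    apply Finset.sum_le_sum
    intro B _
    by_cases hiB : i ∈ B
    · simp [hiB]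
    · simp [hiB, hzero B hiB]


theorem stmt0 (n : ℕ) (hn : 1 ≤ n) (c : Fin n → ℝ) (hc : ∀ i, 0 ≤ c i)
    (α : Finset (Fin n) → ℝ) (hα : ∀ A : Finset (Fin n), A.Nonempty → 0 ≤ α A)
    (h : ∀ A : Finset (Fin n), A.Nonempty →
      (∑ B ∈ Finset.univ.filter fun B : Finset (Fin n) => (B ∩ A).Nonempty, α B)
        > ∑ i ∈ A, c i) :
    ∃ β : Finset (Fin n) → Fin n → ℝ,
      (∀ A : Finset (Fin n), A.Nonempty →
        (∀ i ∈ A, 0 ≤ β A i) ∧ (∑ i ∈ A, β A i) = α A) ∧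
      (∀ i : Fin n,
        (∑ A ∈ Finset.univ.filter fun A : Finset (Fin n) => i ∈ A, β A i) > c i) := by
  classical
  have hFn : (Finset.univ : Finset (Fin n)).Nonempty := ⟨⟨0, hn⟩, Finset.mem_univ _⟩
  set T : Finset (Finset (Fin n)) :=
    Finset.univ.filter (fun S : Finset (Fin n) => S.Nonempty) with hT
  have hTne : T.Nonempty := ⟨Finset.univ, by simp [hT, hFn]⟩
  set g : Finset (Fin n) → ℝ := fun S =>
    (∑ B ∈ Finset.univ.filter fun B : Finset (Fin n) => (B ∩ S).Nonempty, α B)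
      - ∑ i ∈ S, c i with hg
  set δ : ℝ := T.inf' hTne g with hδ
  have hδpos : 0 < δ := by
    rw [hδ, Finset.lt_inf'_iff]
    intro S hS
    simp only [hT, Finset.mem_filter] at hS
    exact sub_pos.mpr (h S hS.2)
  have hδle : ∀ S : Finset (Fin n), S.Nonempty → δ ≤ g S := by
    intro S hS
    exact Finset.inf'_le g (by simp [hT, hS])
  set ε : ℝ := δ / (2 * n) with hε
  have hnpos : (0:ℝ) < n := by
    have : (0:ℕ) < n := hn
    exact_mod_cast this
  have hεpos : 0 < ε := by
    rw [hε]; positivity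
  have hnε : (n : ℝ) * ε = δ / 2 := by
    rw [hε]; field_simp
  set N : ℕ := max 1 ⌈(2^n + n) * 2 / δ⌉₊ with hN
  have hN1 : 1 ≤ N := le_max_left _ _
  have hNpos : (0:ℝ) < N := by
    have : (1:ℕ) ≤ N := hN1
    exact_mod_cast Nat.lt_of_lt_of_le Nat.zero_lt_one this
  have hNδ : (2:ℝ)^n + n ≤ (N : ℝ) * (δ / 2) := by
    have h1 : ((2:ℝ)^n + n) * 2 / δ ≤ (N : ℝ) := by
      calc ((2:ℝ)^n + n) * 2 / δ ≤ (⌈((2:ℝ)^n + n) * 2 / δ⌉₊ : ℝ) := Nat.le_ceil _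
        _ ≤ (N : ℝ) := Nat.cast_le.mpr (le_max_right _ _)
    rw [div_le_iff₀ hδpos] at h1
    nlinarith
  set a : Finset (Fin n) → ℕ := fun B => ⌊(N:ℝ) * α B⌋₊ with ha
  set m : Fin n → ℕ := fun i => ⌈(N:ℝ) * (c i + ε)⌉₊ with hm
  have hcond : ∀ S : Finset (Fin n), S.Nonempty →
      ∑ i ∈ S, m i ≤ ∑ B ∈ Finset.univ.filter fun B : Finset (Fin n) => (B ∩ S).Nonempty, a B := by
    intro S hS
    have hreal : (∑ i ∈ S, (m i : ℝ)) ≤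
        ∑ B ∈ Finset.univ.filter fun B : Finset (Fin n) => (B ∩ S).Nonempty, (a B : ℝ) := by
      have hub : (∑ i ∈ S, (m i : ℝ)) ≤ (N:ℝ) * (∑ i ∈ S, c i) + (N:ℝ) * ((n:ℝ) * ε) + n := by
        have hbd : ∀ i ∈ S, (m i : ℝ) ≤ (N:ℝ) * (c i + ε) + 1 := by
          intro i _
          exact le_of_lt (Nat.ceil_lt_add_one (mul_nonneg hNpos.le (by linarith [hc i, hεpos.le])))
        have hcard : (S.card : ℝ) ≤ (n : ℝ) := by
          have := Finset.card_le_card (Finset.subset_univ S)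
          simp only [Finset.card_univ, Fintype.card_fin] at this
          exact_mod_cast this
        calc (∑ i ∈ S, (m i : ℝ)) ≤ ∑ i ∈ S, ((N:ℝ) * (c i + ε) + 1) := Finset.sum_le_sum hbd
          _ = (N:ℝ) * (∑ i ∈ S, c i) + (N:ℝ) * ((S.card : ℝ) * ε) + S.card := by
              rw [Finset.sum_add_distrib, Finset.sum_const, nsmul_eq_mul, mul_one]
              rw [Finset.mul_sum]
              simp only [mul_add]
              rw [Finset.sum_add_distrib, ← Finset.mul_sum, Finset.sum_const, nsmul_eq_mul]
              ring
          _ ≤ (N:ℝ) * (∑ i ∈ S, c i) + (N:ℝ) * ((n:ℝ) * ε) + n := by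
              have h2 : (N:ℝ) * ((S.card : ℝ) * ε) ≤ (N:ℝ) * ((n:ℝ) * ε) := by
                apply mul_le_mul_of_nonneg_left _ (le_of_lt hNpos)
                exact mul_le_mul_of_nonneg_right hcard (le_of_lt hεpos)
              linarith
      have hlb : (N:ℝ) * (∑ B ∈ Finset.univ.filter fun B : Finset (Fin n) =>
          (B ∩ S).Nonempty, α B) - 2^n ≤
          ∑ B ∈ Finset.univ.filter fun B : Finset (Fin n) => (B ∩ S).Nonempty, (a B : ℝ) := by
        have hterm : ∀ B ∈ (Finset.univ.filter fun B : Finset (Fin n) => (B ∩ S).Nonempty),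
            (N:ℝ) * α B - 1 ≤ (a B : ℝ) :=
          fun B _ => le_of_lt (Nat.sub_one_lt_floor _)
        have hcard2 : ((Finset.univ.filter fun B : Finset (Fin n) =>
            (B ∩ S).Nonempty).card : ℝ) ≤ 2^n := by
          have := Finset.card_filter_le (Finset.univ : Finset (Finset (Fin n)))
            (fun B : Finset (Fin n) => (B ∩ S).Nonempty)
          have h2n : (Finset.univ : Finset (Finset (Fin n))).card = 2^n := by
            simp [Finset.card_univ]
          rw [h2n] at this
          exact_mod_cast this
        calc (N:ℝ) * (∑ B ∈ Finset.univ.filter fun B : Finset (Fin n) =>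
              (B ∩ S).Nonempty, α B) - 2^n
            ≤ (N:ℝ) * (∑ B ∈ Finset.univ.filter fun B : Finset (Fin n) =>
              (B ∩ S).Nonempty, α B) -
              ((Finset.univ.filter fun B : Finset (Fin n) => (B ∩ S).Nonempty).card : ℝ) := by
              linarith
          _ = ∑ B ∈ Finset.univ.filter fun B : Finset (Fin n) => (B ∩ S).Nonempty,
              ((N:ℝ) * α B - 1) := by
              rw [Finset.sum_sub_distrib, Finset.sum_const, nsmul_eq_mul, mul_one,
                Finset.mul_sum]
          _ ≤ _ := Finset.sum_le_sum hterm
      have hNg : (N:ℝ) * δ ≤ (N:ℝ) * g S :=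
        mul_le_mul_of_nonneg_left (hδle S hS) (le_of_lt hNpos)
      rw [hg] at hNg
      simp only [mul_sub] at hNg
      have hr1 : (N:ℝ) * ((n:ℝ) * ε) = (N:ℝ) * (δ / 2) := by rw [hnε]
      have hr2 : (N:ℝ) * δ = 2 * ((N:ℝ) * (δ / 2)) := by ring
      linarith
    exact_mod_cast hreal
  obtain ⟨nn, hnn1, hnn2, hnn3⟩ := hall_int n a m hcond
  set pick : Finset (Fin n) → Fin n := fun A =>
    if hA : A.Nonempty then hA.choose else ⟨0, hn⟩ with hpick
  have hpickmem : ∀ A : Finset (Fin n), A.Nonempty → pick A ∈ A := by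
    intro A hA
    rw [hpick]
    simp only [hA, dif_pos]
    exact hA.choose_spec
  set β : Finset (Fin n) → Fin n → ℝ := fun A i =>
    (nn A i : ℝ) / N + (if i = pick A then α A - ∑ j ∈ A, (nn A j : ℝ) / N else 0) with hβ
  have hL : ∀ A : Finset (Fin n), A.Nonempty → 0 ≤ α A - ∑ j ∈ A, (nn A j : ℝ) / N := by
    intro A hA
    have h1 : ∑ j ∈ A, (nn A j : ℝ) / N = ((∑ j ∈ A, nn A j : ℕ) : ℝ) / N := by
      push_cast
      rw [Finset.sum_div]
    have h2 : ((∑ j ∈ A, nn A j : ℕ) : ℝ) ≤ ((a A : ℕ) : ℝ) := by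
      exact_mod_cast hnn2 A
    have h3 : ((a A : ℕ) : ℝ) ≤ (N:ℝ) * α A :=
      Nat.floor_le (mul_nonneg hNpos.le (hα A hA))
    rw [h1, sub_nonneg, div_le_iff₀ hNpos]
    calc ((∑ j ∈ A, nn A j : ℕ) : ℝ) ≤ (N:ℝ) * α A := le_trans h2 h3
      _ = α A * N := mul_comm _ _
  refine ⟨β, ?_, ?_⟩
  · intro A hA
    constructor
    · intro i _
      simp only [hβ]
      have h1 : (0:ℝ) ≤ (nn A i : ℝ) / N := by positivity
      have h2 : (0:ℝ) ≤ if i = pick A then α A - ∑ j ∈ A, (nn A j : ℝ) / N else 0 := by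
        split
        · exact hL A hA
        · exact le_refl 0
      linarith
    · simp only [hβ]
      rw [Finset.sum_add_distrib]
      have h2 : ∑ i ∈ A, (if i = pick A then α A - ∑ j ∈ A, (nn A j : ℝ) / N else 0)
          = α A - ∑ j ∈ A, (nn A j : ℝ) / N := by
        rw [Finset.sum_ite_eq' A (pick A) (fun _ => α A - ∑ j ∈ A, (nn A j : ℝ) / N)]
        simp [hpickmem A hA]
      rw [h2]
      ring
  · intro i
    have hge : ∀ A ∈ Finset.univ.filter (fun A : Finset (Fin n) => i ∈ A),
        (nn A i : ℝ) / N ≤ β A i := by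
      intro A hAmem
      simp only [Finset.mem_filter] at hAmem
      have hA : A.Nonempty := ⟨i, hAmem.2⟩
      simp only [hβ]
      have h2 : (0:ℝ) ≤ if i = pick A then α A - ∑ j ∈ A, (nn A j : ℝ) / N else 0 := by
        split
        · exact hL A hA
        · exact le_refl 0
      linarith
    have hsumge : ∑ A ∈ Finset.univ.filter (fun A : Finset (Fin n) => i ∈ A),
        (nn A i : ℝ) / N ≤ ∑ A ∈ Finset.univ.filter (fun A : Finset (Fin n) => i ∈ A), β A i :=
      Finset.sum_le_sum hge
    have hcast : (m i : ℝ) ≤ ∑ A ∈ Finset.univ.filter (fun A : Finset (Fin n) => i ∈ A),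
        (nn A i : ℝ) := by
      exact_mod_cast hnn3 i
    have hlow : c i + ε ≤ (m i : ℝ) / N := by
      rw [le_div_iff₀ hNpos]
      calc (c i + ε) * N = (N:ℝ) * (c i + ε) := mul_comm _ _
        _ ≤ (m i : ℝ) := Nat.le_ceil _
    calc c i < c i + ε := by linarith
      _ ≤ (m i : ℝ) / N := hlow
      _ ≤ ∑ A ∈ Finset.univ.filter (fun A : Finset (Fin n) => i ∈ A), (nn A i : ℝ) / N := by
          rw [← Finset.sum_div]
          gcongr
      _ ≤ _ := hsumge
end

section
/- For every natural number $k$, the partially ordered set $O_k = \{t \in [0,1]^k : t_1 \leq t_2 \leq \dots \leq t_k\}$ with the pointwise (coordinatewise) order is irreducible: whenever $O_k$ is order-isomorphic to a product $P \times Q$ of partially ordered sets (with the product order), either $P$ or $Q$ is a singleton. -/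
/-- The ordered set `O_k` of nondecreasing `k`-tuples in `[0,1]`,
with the coordinatewise order inherited from `Fin k → ℝ`. -/
def Ok (k : ℕ) : Set (Fin k → ℝ) :=
  {t | (∀ i, t i ∈ Set.Icc (0 : ℝ) 1) ∧ Monotone t}

theorem stmt1 (k : ℕ) {P Q : Type*} [PartialOrder P] [PartialOrder Q]
    (e : ↥(Ok k) ≃o P × Q) : Subsingleton P ∨ Subsingleton Q := by
  have hc0 : (fun _ : Fin k => (0:ℝ)) ∈ Ok k :=
    ⟨fun i => ⟨le_refl _, zero_le_one⟩, monotone_const⟩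
  have hc1 : (fun _ : Fin k => (1:ℝ)) ∈ Ok k :=
    ⟨fun i => ⟨zero_le_one, le_refl _⟩, monotone_const⟩
  set c0 : ↥(Ok k) := ⟨_, hc0⟩ with hc0def
  set c1 : ↥(Ok k) := ⟨_, hc1⟩ with hc1def
  have hbot : ∀ t : ↥(Ok k), c0 ≤ t := fun t i => (t.2.1 i).1
  have htop : ∀ t : ↥(Ok k), t ≤ c1 := fun t i => (t.2.1 i).2
  have hbot' : ∀ x : P × Q, e c0 ≤ x := by
    intro x
    have := e.monotone (hbot (e.symm x))
    rwa [e.apply_symm_apply] at this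
  have htop' : ∀ x : P × Q, x ≤ e c1 := by
    intro x
    have := e.monotone (htop (e.symm x))
    rwa [e.apply_symm_apply] at this
  by_cases hP : (e c0).1 = (e c1).1
  · left
    constructor
    intro a b
    have ha1 := (hbot' (a, (e c0).2)).1
    have ha2 := (htop' (a, (e c0).2)).1
    have hb1 := (hbot' (b, (e c0).2)).1
    have hb2 := (htop' (b, (e c0).2)).1
    simp only at ha1 ha2 hb1 hb2
    have : a = (e c0).1 := le_antisymm (hP ▸ ha2) ha1
    have hb : b = (e c0).1 := le_antisymm (hP ▸ hb2) hb1
    rw [this, hb]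
  by_cases hQ : (e c0).2 = (e c1).2
  · right
    constructor
    intro a b
    have ha1 := (hbot' ((e c0).1, a)).2
    have ha2 := (htop' ((e c0).1, a)).2
    have hb1 := (hbot' ((e c0).1, b)).2
    have hb2 := (htop' ((e c0).1, b)).2
    simp only at ha1 ha2 hb1 hb2
    have : a = (e c0).2 := le_antisymm (hQ ▸ ha2) ha1
    have hb : b = (e c0).2 := le_antisymm (hQ ▸ hb2) hb1
    rw [this, hb]
  exfalso
  set u : ↥(Ok k) := e.symm ((e c1).1, (e c0).2) with hudef
  set v : ↥(Ok k) := e.symm ((e c0).1, (e c1).2) with hvdef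
  have heu : e u = ((e c1).1, (e c0).2) := e.apply_symm_apply _
  have hev : e v = ((e c0).1, (e c1).2) := e.apply_symm_apply _
  -- the pointwise min of u and v is c0
  have hmin : ∀ i, min (u.1 i) (v.1 i) = 0 := by
    have hwmem : (fun i => min (u.1 i) (v.1 i)) ∈ Ok k := by
      refine ⟨fun i => ⟨le_min (u.2.1 i).1 (v.2.1 i).1,
        le_trans (min_le_left _ _) (u.2.1 i).2⟩, u.2.2.min v.2.2⟩
    set w : ↥(Ok k) := ⟨_, hwmem⟩ with hwdef
    have hwu : w ≤ u := fun i => min_le_left _ _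
    have hwv : w ≤ v := fun i => min_le_right _ _
    have h1 : e w ≤ e c0 := by
      constructor
      · exact le_trans (e.monotone hwv).1 (by rw [hev])
      · exact le_trans (e.monotone hwu).2 (by rw [heu])
    have h2 : e c0 ≤ e w := hbot' _
    have : w = c0 := e.injective (le_antisymm h1 h2)
    intro i
    exact congrFun (congrArg Subtype.val this) i
  have hmax : ∀ i, max (u.1 i) (v.1 i) = 1 := by
    have hwmem : (fun i => max (u.1 i) (v.1 i)) ∈ Ok k := by
      refine ⟨fun i => ⟨le_trans (u.2.1 i).1 (le_max_left _ _),
        max_le (u.2.1 i).2 (v.2.1 i).2⟩, u.2.2.max v.2.2⟩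
    set w : ↥(Ok k) := ⟨_, hwmem⟩ with hwdef
    have hwu : u ≤ w := fun i => le_max_left _ _
    have hwv : v ≤ w := fun i => le_max_right _ _
    have h1 : e c1 ≤ e w := by
      constructor
      · exact le_trans (by rw [heu]) (e.monotone hwu).1
      · exact le_trans (by rw [hev]) (e.monotone hwv).2
    have h2 : e w ≤ e c1 := htop' _
    have : w = c1 := e.injective (le_antisymm h2 h1)
    intro i
    exact congrFun (congrArg Subtype.val this) i
  -- u takes values in {0,1} and v = 1 - u
  have hcases : ∀ i, (u.1 i = 0 ∧ v.1 i = 1) ∨ (u.1 i = 1 ∧ v.1 i = 0) := by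
    intro i
    have h1 := hmin i
    have h2 := hmax i
    rcases le_total (u.1 i) (v.1 i) with h | h
    · left
      rw [min_eq_left h] at h1
      rw [max_eq_right h] at h2
      exact ⟨h1, h2⟩
    · right
      rw [min_eq_right h] at h1
      rw [max_eq_left h] at h2
      exact ⟨h2, h1⟩
  -- u is antitone, hence constant
  have hconst : ∀ i j : Fin k, u.1 i = u.1 j := by
    intro i j
    rcases le_total i j with h | h
    · refine le_antisymm (u.2.2 h) ?_
      have hv := v.2.2 h
      rcases hcases i with ⟨hi1, hi2⟩ | ⟨hi1, hi2⟩ <;>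
        rcases hcases j with ⟨hj1, hj2⟩ | ⟨hj1, hj2⟩ <;>
        simp_all
    · refine le_antisymm ?_ (u.2.2 h)
      have hv := v.2.2 h
      rcases hcases i with ⟨hi1, hi2⟩ | ⟨hi1, hi2⟩ <;>
        rcases hcases j with ⟨hj1, hj2⟩ | ⟨hj1, hj2⟩ <;>
        simp_all
  rcases Nat.eq_zero_or_pos k with hk | hk
  · -- k = 0 : u = c0, so (e c1).1 = (e c0).1
    have : u = c0 := by
      apply Subtype.ext
      funext i
      exact absurd i.2 (by omega)
    apply hP
    have := congrArg e this
    rw [heu] at this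
    exact (Prod.ext_iff.mp this).1.symm
  · set i0 : Fin k := ⟨0, hk⟩
    rcases hcases i0 with ⟨h0, _⟩ | ⟨h0, _⟩
    · have : u = c0 := by
        apply Subtype.ext
        funext i
        rw [hconst i i0, h0]
      apply hP
      have := congrArg e this
      rw [heu] at this
      exact (Prod.ext_iff.mp this).1.symm
    · have : u = c1 := by
        apply Subtype.ext
        funext i
        rw [hconst i i0, h0]
      apply hQ
      have := congrArg e this
      rw [heu] at this
      exact (Prod.ext_iff.mp this).2
end

section
/- For natural numbers $k \neq j$, the partially ordered sets $O_k = \{t \in [0,1]^k : t_1 \leq \dots \leq t_k\}$ and $O_j = \{t \in [0,1]^j : t_1 \leq \dots \leq t_j\}$, each with the coordinatewise order, are not order-isomorphic. -/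
/-- The order invariant: there exist `n` elements `a i` and `n` elements `m i`
with `a i ≤ m i'` for all `i ≠ i'` but never `a i ≤ m i`. -/
def QQ (n : ℕ) (P : Type*) [Preorder P] : Prop :=
  ∃ a m : Fin n → P, (∀ i i' : Fin n, i ≠ i' → a i ≤ m i') ∧ ∀ i, ¬ a i ≤ m i

lemma QQ_of_iso {P Q : Type*} [Preorder P] [Preorder Q] (e : P ≃o Q) {n : ℕ}
    (h : QQ n P) : QQ n Q := by
  obtain ⟨a, m, h1, h2⟩ := h
  exact ⟨fun i => e (a i), fun i => e (m i), fun i i' hne => e.le_iff_le.mpr (h1 i i' hne),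
    fun i hi => h2 i (e.le_iff_le.mp hi)⟩

lemma le_of_QQ {k n : ℕ} (h : QQ n ↥(Ok k)) : n ≤ k := by
  by_contra hn
  push_neg at hn
  obtain ⟨a, m, h1, h2⟩ := h
  have hc : ∀ i : Fin n, ∃ p : Fin k, (m i : Fin k → ℝ) p < (a i : Fin k → ℝ) p := by
    intro i
    by_contra hcon
    push_neg at hcon
    exact h2 i (Subtype.coe_le_coe.mp (fun p => hcon p))
  choose c hcp using hc
  obtain ⟨i, i', hne, hcc⟩ := Fintype.exists_ne_map_eq_of_card_lt c (by simpa)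
  have H1 : (a i : Fin k → ℝ) (c i') ≤ (m i' : Fin k → ℝ) (c i') := h1 i i' hne (c i')
  have H2 : (a i' : Fin k → ℝ) (c i) ≤ (m i : Fin k → ℝ) (c i) := h1 i' i hne.symm (c i)
  have K1 := hcp i
  have K2 := hcp i'
  rw [hcc] at H2 K1
  linarith

lemma QQ_self (k : ℕ) : QQ k ↥(Ok k) := by
  rcases Nat.eq_zero_or_pos k with rfl | hk
  · exact ⟨Fin.elim0, Fin.elim0, fun i => i.elim0, fun i => i.elim0⟩
  have hkk : (0:ℝ) < k := by exact_mod_cast hk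
  have hden : (0:ℝ) < 4 * k := by linarith
  -- bounds on coordinates
  have hp1 : ∀ p : Fin k, (p : ℝ) + 1 ≤ k := by
    intro p
    have := p.isLt
    exact_mod_cast this
  have hp0 : ∀ p : Fin k, (0:ℝ) ≤ (p : ℝ) := fun p => by positivity
  -- membership helper
  have mem : ∀ f : Fin k → ℝ, (∀ p, (2:ℝ) ≤ f p ∧ f p ≤ 4 * (p:ℝ) + 3) →
      ∀ p, (fun p => f p / (4 * k)) p ∈ Set.Icc (0:ℝ) 1 := by
    intro f hf p
    obtain ⟨hl, hu⟩ := hf p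
    constructor
    · positivity
    · rw [div_le_one hden]
      have := hp1 p
      linarith
  -- monotonicity helper
  have mono : ∀ f : Fin k → ℝ, (∀ p : Fin k, 4 * ((p:ℕ):ℝ) + 2 ≤ f p ∧ f p ≤ 4 * ((p:ℕ):ℝ) + 3) →
      Monotone (fun p => f p / (4 * k)) := by
    intro f hf p q hpq
    apply (div_le_div_iff_of_pos_right hden).mpr
    rcases eq_or_lt_of_le hpq with rfl | hlt
    · exact le_rfl
    · have hq : (p : ℝ) + 1 ≤ (q : ℝ) := by exact_mod_cast hlt
      have := (hf p).2
      have := (hf q).1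
      linarith
  refine ⟨fun i => ⟨fun p => (4 * (p:ℝ) + 2 + (if p = i then 1 else 0)) / (4 * k), ?_, ?_⟩,
          fun i => ⟨fun p => (4 * (p:ℝ) + 2 + (if p ≠ i then 1 else 0)) / (4 * k), ?_, ?_⟩,
          ?_, ?_⟩
  · exact mem _ (fun p => by split <;> constructor <;> linarith [hp0 p])
  · exact mono _ (fun p => by split <;> constructor <;> linarith)
  · exact mem _ (fun p => by split <;> constructor <;> linarith [hp0 p])
  · exact mono _ (fun p => by split <;> constructor <;> linarith)
  · intro i i' hne
    intro p
    show (4 * (p:ℝ) + 2 + (if p = i then 1 else 0)) / (4 * k) ≤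
         (4 * (p:ℝ) + 2 + (if p ≠ i' then 1 else 0)) / (4 * k)
    apply (div_le_div_iff_of_pos_right hden).mpr
    by_cases hpi : p = i
    · simp [hpi, hne]
    · simp only [if_neg hpi]
      split <;> linarith
  · intro i hle
    have h2 := hle i
    simp only [ne_eq, not_true_eq_false, if_false, if_pos rfl, if_true] at h2
    have h3 := (div_le_div_iff_of_pos_right hden).mp h2
    norm_num at h3

theorem stmt2 (k j : ℕ) (h : k ≠ j) : IsEmpty (↥(Ok k) ≃o ↥(Ok j)) := by
  constructor
  intro e
  have h1 : j ≤ k := le_of_QQ (QQ_of_iso e.symm (QQ_self j))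
  have h2 : k ≤ j := le_of_QQ (QQ_of_iso e (QQ_self k))
  exact h (le_antisymm h2 h1)
end

section
/- For every natural number $k$, the partially ordered set $P_k = \{t \in [0,1]^{2^{\{1,\dots,k\}}} : \sum_{a \subseteq \{1,\dots,k\}} t_a = 1\}$, ordered by $t \leq s$ iff $\sum_{a \in \mathcal{A}} t_a \leq \sum_{a \in \mathcal{A}} s_a$ for every upwards closed family $\mathcal{A}$ of subsets of $\{1,\dots,k\}$, is irreducible: whenever $P_k$ is order-isomorphic to a product $Q \times R$ of partially ordered sets, either $Q$ or $R$ is a singleton. -/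
/-- The underlying set of `P_k`: functions on subsets of `{1,…,k}` with values
in `[0,1]` summing to `1`. -/
def PkSet (k : ℕ) : Set (Finset (Fin k) → ℝ) :=
  {t | (∀ a, t a ∈ Set.Icc (0 : ℝ) 1) ∧ (∑ a : Finset (Fin k), t a) = 1}

/-- A family of subsets of `{1,…,k}` is upwards closed. -/
def UpClosed {k : ℕ} (𝒜 : Finset (Finset (Fin k))) : Prop :=
  ∀ a ∈ 𝒜, ∀ b : Finset (Fin k), a ⊆ b → b ∈ 𝒜

/-- The order on `P_k`: `t ≤ s` iff the `t`-mass of every upwards closed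
family is at most its `s`-mass. -/
def PkLe {k : ℕ} (t s : ↥(PkSet k)) : Prop :=
  ∀ 𝒜 : Finset (Finset (Fin k)), UpClosed 𝒜 →
    (∑ a ∈ 𝒜, t.1 a) ≤ ∑ a ∈ 𝒜, s.1 a

/-!
Suppose `P_k ≃ Q × R` with both factors nontrivial. Since `δ_∅` is the least element of `P_k`,
the elements `u = (q, ⊥)` and `v = (⊥, r)` of the product are not bottom, their only common lower
bound is `⊥`, and any `y ≤ u`, `y' ≤ v` have the join `(y.1, y'.2)`. In `P_k` every element other
than `δ_∅` lies above a mixture `(1 - ε) δ_∅ + ε δ_{i}` with `0 < ε ≤ 1/2`. Two such mixtures with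
the same `i` are comparable, so one would be a nonzero common lower bound of `u` and `v`. For
`i ≠ j` they have no join: a join would lie below the mixture with mass `max ε δ` at `{i, j}` and
below the one with masses `ε`, `δ` at `{i}`, `{j}`, so its masses on the principal filters of `{i}`
and `{j}` would add up to at most `max ε δ < ε + δ`.
-/

open Finset unitInterval

theorem Prod.exists_axis_pair {Q R : Type*} [PartialOrder Q] [PartialOrder R]
    [Nontrivial Q] [Nontrivial R] {b : Q × R} (hb : IsBot b) :
    ∃ u v : Q × R, u ≠ b ∧ v ≠ b ∧ (∀ y, y ≤ u → y ≤ v → y = b) ∧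
      ∀ y ≤ u, ∀ y' ≤ v, ∃ z : Q × R, ∀ w, z ≤ w ↔ y ≤ w ∧ y' ≤ w := by
  obtain ⟨q, hq⟩ := exists_ne b.1
  obtain ⟨r, hr⟩ := exists_ne b.2
  refine ⟨(q, b.2), (b.1, r), fun h => hq congr($h.1), fun h => hr congr($h.2),
    fun y hyu hyv => Prod.ext (le_antisymm hyv.1 (hb y).1) (le_antisymm hyu.2 (hb y).2),
    fun y hyu y' hy'v => ⟨(y.1, y'.2), fun w => ?_⟩⟩
  have hy : y.2 ≤ w.2 := hyu.2.trans (hb w).2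
  have hy' : y'.1 ≤ w.1 := hy'v.1.trans (hb w).1
  exact ⟨fun h => ⟨⟨h.1, hy⟩, ⟨hy', h.2⟩⟩, fun h => ⟨h.1.1, h.2.2⟩⟩

theorem PkLe.refl {k : ℕ} (x : ↥(PkSet k)) : PkLe x x := fun _ _ => le_rfl

section UpClosed

variable {k : ℕ} {𝒜 ℬ : Finset (Finset (Fin k))}

theorem UpClosed.eq_univ_of_empty_mem (h𝒜 : UpClosed 𝒜) (h : ∅ ∈ 𝒜) : 𝒜 = univ :=
  eq_univ_of_forall fun b => h𝒜 ∅ h b (empty_subset b)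

theorem upClosed_Ici (c : Finset (Fin k)) : UpClosed (Ici c) :=
  fun _ ha _ hab => mem_Ici.2 ((mem_Ici.1 ha).trans hab)

theorem UpClosed.union (h𝒜 : UpClosed 𝒜) (hℬ : UpClosed ℬ) : UpClosed (𝒜 ∪ ℬ) := by
  intro a ha b hab
  rcases mem_union.1 ha with ha | ha
  exacts [mem_union_left _ (h𝒜 a ha b hab), mem_union_right _ (hℬ a ha b hab)]

theorem UpClosed.inter (h𝒜 : UpClosed 𝒜) (hℬ : UpClosed ℬ) : UpClosed (𝒜 ∩ ℬ) :=
  fun a ha b hab => mem_inter.2 ⟨h𝒜 a (mem_inter.1 ha).1 b hab, hℬ a (mem_inter.1 ha).2 b hab⟩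

end UpClosed

namespace PkSet

variable {k : ℕ}

theorem mem_of_nonneg_of_sum_eq_one {t : Finset (Fin k) → ℝ} (h0 : 0 ≤ t)
    (h1 : ∑ a, t a = 1) : t ∈ PkSet k :=
  ⟨fun a => ⟨h0 a, h1 ▸ single_le_sum (fun b _ => h0 b) (mem_univ a)⟩, h1⟩

theorem sum_nonneg (x : ↥(PkSet k)) (𝒜 : Finset (Finset (Fin k))) :
    0 ≤ ∑ a ∈ 𝒜, x.1 a :=
  Finset.sum_nonneg fun a _ => (x.2.1 a).1

theorem sum_mono (x : ↥(PkSet k)) {𝒜 ℬ : Finset (Finset (Fin k))} (h : 𝒜 ⊆ ℬ) :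
    ∑ a ∈ 𝒜, x.1 a ≤ ∑ a ∈ ℬ, x.1 a :=
  sum_le_sum_of_subset_of_nonneg h fun a _ _ => (x.2.1 a).1

def twoPoint (c : Finset (Fin k)) (ε : I) : ↥(PkSet k) :=
  ⟨Pi.single ∅ (1 - (ε : ℝ)) + Pi.single c (ε : ℝ), mem_of_nonneg_of_sum_eq_one
    (add_nonneg (Pi.single_nonneg.2 (one_minus_nonneg ε)) (Pi.single_nonneg.2 ε.2.1))
    (by simp [sum_add_distrib, sum_pi_single'])⟩

theorem sum_twoPoint (c : Finset (Fin k)) (ε : I) (𝒜 : Finset (Finset (Fin k))) :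
    ∑ a ∈ 𝒜, (twoPoint c ε).1 a =
      (if ∅ ∈ 𝒜 then 1 - (ε : ℝ) else 0) + if c ∈ 𝒜 then (ε : ℝ) else 0 := by
  simp [twoPoint, sum_add_distrib, sum_pi_single']

theorem twoPoint_le_iff (c : Finset (Fin k)) (ε : I) (x : ↥(PkSet k)) :
    PkLe (twoPoint c ε) x ↔ (ε : ℝ) ≤ ∑ a ∈ Ici c, x.1 a := by
  constructor
  · intro h
    have := h _ (upClosed_Ici c)
    rw [sum_twoPoint, if_pos (mem_Ici.2 le_rfl)] at this
    refine le_trans (le_add_of_nonneg_left ?_) this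
    split_ifs
    exacts [one_minus_nonneg ε, le_rfl]
  · intro h 𝒜 h𝒜
    rw [sum_twoPoint]
    by_cases hempty : ∅ ∈ 𝒜
    · rw [h𝒜.eq_univ_of_empty_mem hempty, x.2.2]
      simp
    by_cases hc : c ∈ 𝒜
    · have hsub : Ici c ⊆ 𝒜 := fun b hb => h𝒜 c hc b (mem_Ici.1 hb)
      simpa [hempty, hc] using h.trans (sum_mono x hsub)
    · simpa [hempty, hc] using sum_nonneg x 𝒜

theorem twoPoint_zero_le (c : Finset (Fin k)) (x : ↥(PkSet k)) : PkLe (twoPoint c 0) x :=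
  (twoPoint_le_iff c 0 x).2 (sum_nonneg x _)

theorem twoPoint_le_twoPoint_iff {c : Finset (Fin k)} (hc : c ≠ ∅) (d : Finset (Fin k))
    (ε δ : I) : PkLe (twoPoint c ε) (twoPoint d δ) ↔ (ε : ℝ) ≤ if c ⊆ d then (δ : ℝ) else 0 := by
  rw [twoPoint_le_iff, sum_twoPoint]
  simp [hc]

theorem twoPoint_mono {c : Finset (Fin k)} (hc : c ≠ ∅) {ε δ : I} (h : ε ≤ δ) :
    PkLe (twoPoint c ε) (twoPoint c δ) :=
  (twoPoint_le_twoPoint_iff hc c ε δ).2 (by simpa using h)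

theorem exists_twoPoint_le_of_not_le (x : ↥(PkSet k)) (hx : ¬PkLe x (twoPoint ∅ 0)) :
    ∃ (i : Fin k) (ε : I), 0 < (ε : ℝ) ∧ (ε : ℝ) ≤ 1 / 2 ∧ PkLe (twoPoint {i} ε) x := by
  simp only [PkLe, not_forall, not_le] at hx
  obtain ⟨𝒜, h𝒜, hlt⟩ := hx
  have hempty : ∅ ∉ 𝒜 := fun h => by
    rw [h𝒜.eq_univ_of_empty_mem h, x.2.2, sum_twoPoint] at hlt
    simp at hlt
  rw [sum_twoPoint] at hlt
  obtain ⟨a, ha, hpos⟩ :=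
    exists_lt_of_sum_lt (s := 𝒜) (f := 0) (g := x.1) (by simpa [hempty] using hlt)
  obtain ⟨i, hi⟩ := nonempty_iff_ne_empty.2 (ne_of_mem_of_not_mem ha hempty)
  refine ⟨i, ⟨min (x.1 a) (1 / 2), le_min hpos.le (by norm_num),
    (min_le_right _ _).trans (by norm_num)⟩, lt_min hpos (by norm_num), min_le_right _ _,
    (twoPoint_le_iff _ _ x).2 ?_⟩
  exact (min_le_left _ _).trans
    (single_le_sum (fun b _ => (x.2.1 b).1) (mem_Ici.2 (singleton_subset_iff.2 hi)))

theorem exists_upperBound_twoPoint_sum_inter_eq_zero {i j : Fin k} (hij : i ≠ j) {ε δ : I}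
    (hεδ : (ε : ℝ) + δ ≤ 1) :
    ∃ w : ↥(PkSet k), PkLe (twoPoint {i} ε) w ∧ PkLe (twoPoint {j} δ) w ∧
      ∑ a ∈ Ici {i} ∩ Ici {j}, w.1 a = 0 := by
  let w : ↥(PkSet k) :=
    ⟨Pi.single ∅ (1 - (ε : ℝ) - δ) + Pi.single {i} (ε : ℝ) + Pi.single {j} (δ : ℝ),
      mem_of_nonneg_of_sum_eq_one
        (add_nonneg (add_nonneg (Pi.single_nonneg.2 (by linarith)) (Pi.single_nonneg.2 ε.2.1))
          (Pi.single_nonneg.2 δ.2.1))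
        (by simp [sum_add_distrib, sum_pi_single']; ring)⟩
  refine ⟨w, (twoPoint_le_iff _ _ w).2 ?_, (twoPoint_le_iff _ _ w).2 ?_, ?_⟩ <;>
    simp [w, sum_add_distrib, sum_pi_single', hij, hij.symm]

theorem not_exists_sup_twoPoint {i j : Fin k} (hij : i ≠ j) {ε δ : I} (hε : 0 < (ε : ℝ))
    (hδ : 0 < (δ : ℝ)) (hεδ : (ε : ℝ) + δ ≤ 1) :
    ¬∃ z : ↥(PkSet k), ∀ w, PkLe z w ↔ PkLe (twoPoint {i} ε) w ∧ PkLe (twoPoint {j} δ) w := by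
  rintro ⟨z, hz⟩
  obtain ⟨hiz, hjz⟩ := (hz z).1 (PkLe.refl z)
  rw [twoPoint_le_iff] at hiz hjz
  obtain ⟨w, hiw, hjw, hw⟩ := exists_upperBound_twoPoint_sum_inter_eq_zero hij hεδ
  have hinter := (hz w).2 ⟨hiw, hjw⟩ _ ((upClosed_Ici {i}).inter (upClosed_Ici {j}))
  have hpair : ({i} : Finset (Fin k)) ≠ ∅ ∧ ({j} : Finset (Fin k)) ≠ ∅ :=
    ⟨singleton_ne_empty i, singleton_ne_empty j⟩
  have hunion := (hz (twoPoint {i, j} (max ε δ))).2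
    ⟨(twoPoint_le_twoPoint_iff hpair.1 _ _ _).2 (by simp),
      (twoPoint_le_twoPoint_iff hpair.2 _ _ _).2 (by simp)⟩
    _ ((upClosed_Ici {i}).union (upClosed_Ici {j}))
  rw [sum_twoPoint] at hunion
  simp only [mem_union, mem_Ici, subset_empty, hpair, or_self, if_false, zero_add,
    singleton_subset_iff, mem_insert, mem_singleton, true_or, if_true] at hunion
  have hmax : ((max ε δ : I) : ℝ) < ε + δ := by
    simp only [Set.Icc.coe_sup, max_lt_iff]
    constructor <;> linarith
  linarith [sum_union_inter (f := z.1) (s₁ := Ici {i}) (s₂ := Ici {j})]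

end PkSet

open PkSet

theorem stmt4 (k : ℕ) {Q R : Type*} [PartialOrder Q] [PartialOrder R]
    (e : ↥(PkSet k) ≃ Q × R) (he : ∀ t s : ↥(PkSet k), PkLe t s ↔ e t ≤ e s) :
    Subsingleton Q ∨ Subsingleton R := by
  by_contra! ⟨hQ, hR⟩
  have hbot : IsBot (e (twoPoint ∅ 0)) := fun x => by
    simpa [he] using twoPoint_zero_le ∅ (e.symm x)
  obtain ⟨u, v, hu, hv, hdisj, hsup⟩ := Prod.exists_axis_pair hbot
  have not_le_bot {x} (hx : x ≠ e (twoPoint ∅ 0)) : ¬PkLe (e.symm x) (twoPoint ∅ 0) :=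
    fun h => hx (le_antisymm (by simpa [he] using h) (hbot _))
  obtain ⟨i, ε, hε, hε2, hiu⟩ := exists_twoPoint_le_of_not_le _ (not_le_bot hu)
  obtain ⟨j, δ, hδ, hδ2, hjv⟩ := exists_twoPoint_le_of_not_le _ (not_le_bot hv)
  rw [he, e.apply_symm_apply] at hiu hjv
  rcases eq_or_ne i j with rfl | hij
  · have hi := singleton_ne_empty i
    have hmin_eq := hdisj _ (((he _ _).1 (twoPoint_mono hi (min_le_left ε δ))).trans hiu)
      (((he _ _).1 (twoPoint_mono hi (min_le_right ε δ))).trans hjv)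
    have hmin_le := (twoPoint_le_twoPoint_iff hi ∅ (min ε δ) 0).1 ((he _ _).2 hmin_eq.le)
    simp only [subset_empty, hi, if_false, Set.Icc.coe_inf, inf_le_iff] at hmin_le
    exact hmin_le.elim hε.not_ge hδ.not_ge
  · obtain ⟨z, hz⟩ := hsup _ hiu _ hjv
    exact not_exists_sup_twoPoint hij hε hδ (by linarith)
      ⟨e.symm z, fun w => by simpa [he] using hz (e w)⟩
end

section
/- Let $\{f_i : K_i \to L_i\}_{i \in I}$ be a family of continuous surjections between topological spaces, let $f = \prod_{i \in I} f_i : \prod_{i \in I} K_i \to \prod_{i \in I} L_i$ be the product map, and let $x = (x_i)_{i \in I} \in \prod_{i \in I} L_i$. Then the natural bijection from $f^{-1}(x)$ to $\prod_{i \in I} f_i^{-1}(x_i)$ is an isomorphism of preordered sets, where each fiber carries the fiber preorder ($s \leq t$ iff every image of a neighborhood of $s$ contains the image of a neighborhood of $t$) and the product carries the coordinatewise preorder. -/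
/-- The fiber preorder relation. -/
def FiberLe {K L : Type*} [TopologicalSpace K] [TopologicalSpace L]
    (f : K → L) (s t : K) : Prop :=
  ∀ U : Set K, IsOpen U → s ∈ U → ∃ V : Set K, IsOpen V ∧ t ∈ V ∧ f '' V ⊆ f '' U

theorem stmt9 {I : Type*} {K L : I → Type*}
    [∀ i, TopologicalSpace (K i)] [∀ i, TopologicalSpace (L i)]
    (f : ∀ i, K i → L i) (hcont : ∀ i, Continuous (f i))
    (hsurj : ∀ i, Function.Surjective (f i))
    (x : ∀ i, L i) (s t : ∀ i, K i)
    (hs : ∀ i, f i (s i) = x i) (ht : ∀ i, f i (t i) = x i) :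
    FiberLe (fun (y : ∀ i, K i) (i : I) => f i (y i)) s t ↔
      ∀ i, FiberLe (f i) (s i) (t i) := by
  classical
  constructor
  · intro h i U hU hsU
    obtain ⟨V, hVopen, htV, himg⟩ :=
      h ((· i) ⁻¹' U) (hU.preimage (continuous_apply i)) hsU
    refine ⟨{v : K i | Function.update t i v ∈ V}, ?_, ?_, ?_⟩
    · exact hVopen.preimage
        ((continuous_update i).comp (continuous_const.prodMk continuous_id))
    · simpa using htV
    · rintro _ ⟨v, hv, rfl⟩
      obtain ⟨z, hz, hze⟩ := himg ⟨Function.update t i v, hv, rfl⟩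
      have := congrFun hze i
      simp only [Function.update_self] at this
      exact ⟨z i, hz, this⟩
  · intro h U hU hsU
    obtain ⟨Fs, u, hu, hsub⟩ := (isOpen_pi_iff.mp hU) s hsU
    have hch : ∀ j, ∃ V : Set (K j),
        j ∈ Fs → IsOpen V ∧ t j ∈ V ∧ f j '' V ⊆ f j '' (u j) := by
      intro j
      by_cases hj : j ∈ Fs
      · obtain ⟨V, h1, h2, h3⟩ := h j (u j) (hu j hj).1 (hu j hj).2
        exact ⟨V, fun _ => ⟨h1, h2, h3⟩⟩
      · exact ⟨Set.univ, fun hj' => absurd hj' hj⟩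
    choose V hV using hch
    refine ⟨(Fs : Set I).pi V, ?_, ?_, ?_⟩
    · exact isOpen_set_pi Fs.finite_toSet (fun j hj => (hV j hj).1)
    · exact fun j hj => (hV j hj).2.1
    · rintro _ ⟨y, hy, rfl⟩
      have hb : ∀ j, ∃ b : K j, j ∈ Fs → b ∈ u j ∧ f j b = f j (y j) := by
        intro j
        by_cases hj : j ∈ Fs
        · obtain ⟨b, hb1, hb2⟩ := (hV j hj).2.2 ⟨y j, hy j hj, rfl⟩
          exact ⟨b, fun _ => ⟨hb1, hb2⟩⟩
        · exact ⟨y j, fun hj' => absurd hj' hj⟩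
      choose b hbp using hb
      refine ⟨fun j => if hj : j ∈ Fs then b j else y j, ?_, ?_⟩
      · apply hsub
        intro j hj
        show (if hj : j ∈ Fs then b j else y j) ∈ u j
        simp only [Finset.mem_coe] at hj
        rw [dif_pos hj]
        exact (hbp j hj).1
      · funext j
        by_cases hj : j ∈ Fs
        · simp only [dif_pos hj]; exact (hbp j hj).2
        · simp only [dif_neg hj]
end

section
/- Let $M \supseteq N$ be infinite sets, let $B(M) = \{x \in \mathbb{R}^M : \sum_{i \in M} |x_i| \leq 1\}$ with the product (pointwise) topology, and let $p : B(M) \to B(N)$ be the restriction map $p(x) = (x_i)_{i \in N}$. Fix $x \in B(N)$ and let $y^1, y^2 \in p^{-1}(x)$. Then $y^1 \leq y^2$ in the fiber preorder (i.e., for every neighborhood $U$ of $y^1$ there is a neighborhood $V$ of $y^2$ with $p(V) \subseteq p(U)$) if and only if $\sum_{i \in M \setminus N} |y^1_i| \leq \sum_{i \in M \setminus N} |y^2_i|$. -/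
/-- The ball `B(α) = {x : ℝ^α : ∑ |x_i| ≤ 1}` (sums as suprema of finite
partial sums), carrying the product (pointwise) topology. -/
def Ball (α : Type*) : Set (α → ℝ) :=
  {x | ∀ F : Finset α, (∑ i ∈ F, |x i|) ≤ 1}

/-- The restriction map `B(M) → B(N)` for `N ⊆ M`. -/
def ballRestrict {M : Type*} (N : Set M) (x : ↥(Ball M)) : ↥(Ball ↥N) :=
  ⟨fun i => x.1 i, by
    intro F
    have h := x.2 (F.map (Function.Embedding.subtype _))
    rwa [Finset.sum_map] at h⟩

private lemma ball_abs_le_one {M : Type*} (y : ↥(Ball M)) (i : M) : |y.1 i| ≤ 1 := by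
  simpa using y.2 {i}

private lemma ball_summable {M : Type*} (y : ↥(Ball M)) :
    Summable fun i => |y.1 i| :=
  summable_of_sum_le (fun i => abs_nonneg _) y.2

private lemma sum_le_tsum_subtype {ι : Type*} {f : ι → ℝ} (hf0 : ∀ i, 0 ≤ f i)
    (hf : Summable f) (s : Set ι) (K : Finset ι) (hK : ↑K ⊆ s) :
    ∑ i ∈ K, f i ≤ ∑' i : s, f i := by
  rw [tsum_subtype]
  have he : ∑ i ∈ K, f i = ∑ i ∈ K, s.indicator f i :=
    Finset.sum_congr rfl fun i hi => (Set.indicator_of_mem (hK hi) f).symm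
  rw [he]
  exact Summable.sum_le_tsum K (fun i _ => Set.indicator_nonneg (fun j _ => hf0 j) i)
    (hf.indicator s)

private lemma exists_finset_sum_gt {ι : Type*} {f : ι → ℝ} (hf : Summable f)
    {b : ℝ} (hb : b < ∑' i, f i) : ∃ F : Finset ι, b < ∑ i ∈ F, f i :=
  (hf.hasSum.eventually (eventually_gt_nhds hb)).exists

private lemma exists_uniform_eps {M : Type*} (I : Finset M) (c : M → ℝ) (u : M → Set ℝ)
    (h : ∀ i ∈ I, IsOpen (u i) ∧ c i ∈ u i) :
    ∃ ε > 0, ∀ i ∈ I, Metric.ball (c i) ε ⊆ u i := by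
  induction I using Finset.cons_induction with
  | empty => exact ⟨1, one_pos, fun i hi => absurd hi (Finset.notMem_empty i)⟩
  | cons a s ha ih =>
    obtain ⟨ε, hε, hball⟩ := ih (fun i hi => h i (Finset.mem_cons_of_mem hi))
    obtain ⟨ha_open, ha_mem⟩ := h a (Finset.mem_cons_self a s)
    obtain ⟨δ, hδ, hδball⟩ := Metric.isOpen_iff.1 ha_open _ ha_mem
    refine ⟨min ε δ, lt_min hε hδ, fun i hi => ?_⟩
    rcases Finset.mem_cons.1 hi with rfl | hi
    · exact (Metric.ball_subset_ball (min_le_right _ _)).trans hδball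
    · exact (Metric.ball_subset_ball (min_le_left _ _)).trans (hball i hi)

private lemma exists_basic {M : Type*} {U : Set ↥(Ball M)} (hU : IsOpen U)
    {y : ↥(Ball M)} (hy : y ∈ U) :
    ∃ (K : Finset M) (ε : ℝ), 0 < ε ∧
      {w : ↥(Ball M) | ∀ i ∈ K, |w.1 i - y.1 i| < ε} ⊆ U := by
  rw [isOpen_induced_iff] at hU
  obtain ⟨t, ht, rfl⟩ := hU
  obtain ⟨I, u, hIu, hpi⟩ := (isOpen_pi_iff.1 ht) y.1 hy
  obtain ⟨ε, hε, hball⟩ := exists_uniform_eps I y.1 u hIu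
  refine ⟨I, ε, hε, fun w hw => ?_⟩
  refine hpi fun i hi => hball i hi ?_
  rw [Metric.mem_ball, Real.dist_eq]
  exact hw i hi

private lemma isOpen_basic {M : Type*} (K : Finset M) (c : M → ℝ) (ε : ℝ) :
    IsOpen {w : ↥(Ball M) | ∀ i ∈ K, |w.1 i - c i| < ε} := by
  have he : {w : ↥(Ball M) | ∀ i ∈ K, |w.1 i - c i| < ε}
      = Subtype.val ⁻¹' (Set.pi ↑K (fun i => Metric.ball (c i) ε)) := by
    ext w
    simp [Set.mem_pi, Real.dist_eq]
  rw [he]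
  exact (isOpen_set_pi K.finite_toSet (fun i _ => Metric.isOpen_ball)).preimage
    continuous_subtype_val

set_option maxHeartbeats 2000000 in
theorem stmt11 {M : Type*} [Infinite M] (N : Set M) (hN : N.Infinite)
    (x : ↥(Ball ↥N)) (y1 y2 : ↥(Ball M))
    (h1 : ballRestrict N y1 = x) (h2 : ballRestrict N y2 = x) :
    FiberLe (ballRestrict N) y1 y2 ↔
      (∑' i : ↥(Nᶜ : Set M), |y1.1 i|) ≤ ∑' i : ↥(Nᶜ : Set M), |y2.1 i| := by
  classical
  have hvals : ∀ i ∈ N, y1.1 i = y2.1 i := by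
    intro i hi
    exact congrFun (congrArg Subtype.val (h1.trans h2.symm)) ⟨i, hi⟩
  have hsum1 : Summable (fun i : ↥(Nᶜ : Set M) => |y1.1 i.1|) :=
    (ball_summable y1).subtype _
  have hsum2 : Summable (fun i : ↥(Nᶜ : Set M) => |y2.1 i.1|) :=
    (ball_summable y2).subtype _
  set c1 := ∑' i : ↥(Nᶜ : Set M), |y1.1 i| with hc1
  set c2 := ∑' i : ↥(Nᶜ : Set M), |y2.1 i| with hc2
  constructor
  · -- FiberLe → c1 ≤ c2
    intro hle
    by_contra hlt
    push_neg at hlt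
    -- choose a finite set of complement coordinates carrying y1-mass > c2
    obtain ⟨FC, hFC⟩ := exists_finset_sum_gt hsum1 (show c2 < ∑' i : ↥(Nᶜ : Set M), |y1.1 i.1| from by rw [← hc1]; exact hlt)
    set FCm := FC.map (Function.Embedding.subtype _) with hFCm
    have hFCmC : ∀ i ∈ FCm, i ∈ (Nᶜ : Set M) := by
      intro i hi
      obtain ⟨a, _, rfl⟩ := Finset.mem_map.1 hi
      exact a.2
    set S1 := ∑ i ∈ FCm, |y1.1 i| with hS1
    have hS1gt : c2 < S1 := by rw [hS1, hFCm, Finset.sum_map]; exact hFC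
    set n := (FCm.card : ℝ) with hn
    have hn0 : (0:ℝ) ≤ n := by positivity
    set ε := (S1 - c2) / (2 * (n + 1)) with hε
    have hεpos : 0 < ε := div_pos (by linarith) (by linarith)
    set U := {w : ↥(Ball M) | ∀ i ∈ FCm, |w.1 i - y1.1 i| < ε} with hU
    obtain ⟨V, hVopen, hy2V, himg⟩ := hle U (isOpen_basic _ _ _)
      (by intro i hi; simpa using hεpos)
    obtain ⟨G, ε', hε'pos, hGV⟩ := exists_basic hVopen hy2V
    obtain ⟨j, hjN, hjG⟩ := (hN.diff G.finite_toSet).nonempty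
    set SN := ∑' i : ↥N, |y2.1 i.1| with hSN
    have hsumN2 : Summable (fun i : ↥N => |y2.1 i.1|) := (ball_summable y2).subtype _
    have htot : SN + c2 = ∑' i, |y2.1 i| := by
      rw [hSN, hc2]
      exact Summable.tsum_add_tsum_compl (f := fun i => |y2.1 i|) (s := N) hsumN2 hsum2
    have htot1 : SN + c2 ≤ 1 := by
      rw [htot]
      exact Summable.tsum_le_of_sum_le (ball_summable y2) y2.2
    set r := 1 - c2 - SN with hr
    have hr0 : 0 ≤ r := by rw [hr]; linarith
    set σ : ℝ := if 0 ≤ y2.1 j then 1 else -1 with hσ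
    set g : M → ℝ := fun i => if i ∈ N then (if i = j then y2.1 j + σ * r else y2.1 i)
      else (if i ∈ G then y2.1 i else 0) with hg
    have hgj : |g j| = |y2.1 j| + r := by
      have hgjv : g j = y2.1 j + σ * r := by simp [hg, hjN]
      rw [hgjv, hσ]
      split_ifs with h
      · rw [one_mul, abs_of_nonneg (by linarith), abs_of_nonneg h]
      · push_neg at h
        rw [neg_one_mul, abs_of_nonpos (by linarith), abs_of_neg h]
        ring
    have hgle : ∀ i, |g i| ≤ |y2.1 i| + (if i = j then r else 0) := by
      intro i
      by_cases hij : i = j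
      · subst hij; rw [hgj, if_pos rfl]
      · rw [if_neg hij]
        simp only [hg, if_neg hij]
        split_ifs with h1i h2i
        · simp
        · simp
        · simp [abs_nonneg]
    have hgball : g ∈ Ball M := by
      intro K
      calc ∑ i ∈ K, |g i| ≤ ∑ i ∈ K, (|y2.1 i| + (if i = j then r else 0)) :=
            Finset.sum_le_sum fun i _ => hgle i
        _ = (∑ i ∈ K, |y2.1 i|) + ∑ i ∈ K, (if i = j then r else 0) :=
            Finset.sum_add_distrib
        _ ≤ (SN + c2) + r := by
            have hA : ∑ i ∈ K, |y2.1 i| ≤ SN + c2 := by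
              rw [htot]
              exact Summable.sum_le_tsum K (fun i _ => abs_nonneg _) (ball_summable y2)
            have hB : ∑ i ∈ K, (if i = j then r else 0) ≤ r := by
              rw [Finset.sum_ite_eq' K j (fun _ => r)]
              split_ifs <;> simp [hr0]
            exact add_le_add hA hB
        _ ≤ 1 := by rw [hr]; linarith
    set v : ↥(Ball M) := ⟨g, hgball⟩ with hv
    have hvV : v ∈ V := by
      apply hGV
      intro i hi
      have hioj : g i = y2.1 i := by
        have hij : i ≠ j := by rintro rfl; exact hjG (Finset.mem_coe.2 hi)
        simp only [hg, if_neg hij]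
        split_ifs <;> rfl
      show |g i - y2.1 i| < ε'
      rw [hioj, sub_self, abs_zero]
      exact hε'pos
    obtain ⟨w, hwU, hweq⟩ := himg (Set.mem_image_of_mem _ hvV)
    have hweqN : ∀ i (hi : i ∈ N), w.1 i = g i := by
      intro i hi
      exact congrFun (congrArg Subtype.val hweq) ⟨i, hi⟩
    -- tsum of |g| over N is 1 - c2
    have hptg : ∀ i : ↥N, |g i.1| = |y2.1 i.1| + (if i = (⟨j, hjN⟩ : ↥N) then r else 0) := by
      intro i
      by_cases hij : i = (⟨j, hjN⟩ : ↥N)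
      · subst hij; simpa using hgj
      · have hij' : i.1 ≠ j := fun h => hij (Subtype.ext h)
        rw [if_neg hij, add_zero]
        simp only [hg, if_pos i.2, if_neg hij']
    have hsumind : Summable (fun i : ↥N => if i = (⟨j, hjN⟩ : ↥N) then r else (0:ℝ)) :=
      summable_of_ne_finset_zero (s := {⟨j, hjN⟩}) (by
        intro b hb
        simp only [Finset.mem_singleton] at hb
        simp [hb])
    have hsumgN : Summable (fun i : ↥N => |g i.1|) :=
      (hsumN2.add hsumind).congr (fun i => (hptg i).symm)
    have htsumgN : ∑' i : ↥N, |g i.1| = 1 - c2 := by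
      rw [tsum_congr hptg, Summable.tsum_add hsumN2 hsumind, tsum_ite_eq, ← hSN, hr]
      ring
    have hid : ε * (2 * (n + 1)) = S1 - c2 := by
      rw [hε]
      exact div_mul_cancel₀ _ (by linarith : (0:ℝ) < 2 * (n + 1)).ne'
    have hb : 1 - S1 + n * ε < 1 - c2 := by nlinarith [hεpos, hn0]
    obtain ⟨H, hH⟩ := exists_finset_sum_gt hsumgN (by rw [htsumgN]; exact hb)
    set Hm := H.map (Function.Embedding.subtype _) with hHm
    have hHmN : ∀ i ∈ Hm, i ∈ N := by
      intro i hi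
      obtain ⟨a, _, rfl⟩ := Finset.mem_map.1 hi
      exact a.2
    have hdisj : Disjoint Hm FCm := by
      rw [Finset.disjoint_left]
      intro a haH haF
      exact (hFCmC a haF) (hHmN a haH)
    have hsumw := w.2 (Hm ∪ FCm)
    rw [Finset.sum_union hdisj] at hsumw
    have hA : ∑ i ∈ Hm, |w.1 i| = ∑ i ∈ H, |g i.1| := by
      rw [hHm, Finset.sum_map]
      exact Finset.sum_congr rfl fun i _ => by
        simp only [Function.Embedding.coe_subtype]
        rw [hweqN i.1 i.2]
    have hB : S1 - n * ε ≤ ∑ i ∈ FCm, |w.1 i| := by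
      have hterm : ∀ i ∈ FCm, |y1.1 i| - ε ≤ |w.1 i| := by
        intro i hi
        have h1 : |w.1 i - y1.1 i| < ε := hwU i hi
        have h2 := abs_sub_abs_le_abs_sub (y1.1 i) (w.1 i)
        rw [abs_sub_comm] at h2
        linarith
      calc S1 - n * ε = ∑ i ∈ FCm, (|y1.1 i| - ε) := by
            rw [Finset.sum_sub_distrib, Finset.sum_const, nsmul_eq_mul, hS1, hn]
        _ ≤ ∑ i ∈ FCm, |w.1 i| := Finset.sum_le_sum hterm
    linarith [hH, hA ▸ hH]
  · -- c1 ≤ c2 → FiberLe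
    intro hc U hUopen hy1U
    obtain ⟨F, ε, hεpos, hFU⟩ := exists_basic hUopen hy1U
    set FN := F.filter (fun i => i ∈ N) with hFN
    set FC := F.filter (fun i => i ∉ N) with hFCdef
    set S1 := ∑ i ∈ FC, |y1.1 i| with hS1
    have hS1c1 : S1 ≤ c1 := by
      rw [hS1, hc1]
      apply sum_le_tsum_subtype (fun i => abs_nonneg _) (ball_summable y1) (Nᶜ) FC
      intro i hi
      exact (Finset.mem_filter.1 hi).2
    rcases le_or_gt S1 0 with hS10 | hS10
    · -- degenerate case: y1 has no mass on the chosen complement coordinates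
      have hS1eq : S1 = 0 :=
        le_antisymm hS10 (Finset.sum_nonneg fun i _ => abs_nonneg _)
      have hzero : ∀ i ∈ FC, |y1.1 i| = 0 := fun i hi =>
        (Finset.sum_eq_zero_iff_of_nonneg (fun i _ => abs_nonneg _)).1 hS1eq i hi
      refine ⟨{w : ↥(Ball M) | ∀ i ∈ FN, |w.1 i - y2.1 i| < ε}, isOpen_basic _ _ _,
        by intro i hi; simpa using hεpos, ?_⟩
      rintro z ⟨v, hvV, rfl⟩
      set g : M → ℝ := fun i => if i ∈ N then v.1 i else 0 with hg
      have hgball : g ∈ Ball M := by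
        intro K
        refine le_trans (Finset.sum_le_sum (fun i _ => ?_)) (v.2 K)
        simp only [hg]
        split_ifs
        · exact le_refl _
        · simpa using abs_nonneg (v.1 i)
      set w : ↥(Ball M) := ⟨g, hgball⟩ with hwdef
      have hwU : w ∈ U := by
        apply hFU
        intro i hi
        show |g i - y1.1 i| < ε
        by_cases hiN : i ∈ N
        · rw [show g i = v.1 i from if_pos hiN, hvals i hiN]
          exact hvV i (Finset.mem_filter.2 ⟨hi, hiN⟩)
        · rw [show g i = 0 from if_neg hiN, zero_sub, abs_neg,
            hzero i (Finset.mem_filter.2 ⟨hi, hiN⟩)]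
          exact hεpos
      refine ⟨w, hwU, ?_⟩
      apply Subtype.ext
      funext i
      show g i.1 = v.1 i.1
      exact if_pos i.2
    · -- main case
      set m := min ε 1 with hm
      have hm0 : 0 < m := lt_min hεpos one_pos
      have hmε : m ≤ ε := min_le_left _ _
      have hm1 : m ≤ 1 := min_le_right _ _
      set δ := m * S1 / 8 with hδ
      have hδ0 : 0 < δ := by rw [hδ]; positivity
      obtain ⟨GC, hGC⟩ := exists_finset_sum_gt hsum2
        (show c2 - δ < ∑' i : ↥(Nᶜ : Set M), |y2.1 i.1| from by rw [← hc2]; linarith)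
      set GCm := GC.map (Function.Embedding.subtype _) with hGCm
      have hGCmC : ∀ i ∈ GCm, i ∈ (Nᶜ : Set M) := by
        intro i hi
        obtain ⟨a, _, rfl⟩ := Finset.mem_map.1 hi
        exact a.2
      have hGCsum : c2 - δ < ∑ i ∈ GCm, |y2.1 i| := by
        rw [hGCm, Finset.sum_map]; exact hGC
      set n := (GCm.card : ℝ) with hn
      have hn0 : (0:ℝ) ≤ n := by positivity
      set ε' := min ε (δ / (n + 1)) with hε'
      have hε'0 : 0 < ε' := lt_min hεpos (by positivity)
      have hε'ε : ε' ≤ ε := min_le_left _ _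
      refine ⟨{w : ↥(Ball M) | ∀ i ∈ FN ∪ GCm, |w.1 i - y2.1 i| < ε'}, isOpen_basic _ _ _,
        by intro i hi; simpa using hε'0, ?_⟩
      rintro z ⟨v, hvV, rfl⟩
      set t := 1 - m / 2 with ht
      have ht0 : 0 ≤ t := by rw [ht]; linarith
      have ht1 : t ≤ 1 := by rw [ht]; linarith
      set g : M → ℝ := fun i => if i ∈ N then v.1 i
        else if i ∈ FC then t * y1.1 i else 0 with hg
      have hGCv : c2 - 2 * δ ≤ ∑ i ∈ GCm, |v.1 i| := by
        have h1 : ∀ i ∈ GCm, |y2.1 i| ≤ |v.1 i| + ε' := by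
          intro i hi
          have h2 := hvV i (Finset.mem_union_right _ hi)
          have h3 := abs_sub_abs_le_abs_sub (y2.1 i) (v.1 i)
          rw [abs_sub_comm] at h3
          exact le_of_lt (by linarith)
        have h4 : ∑ i ∈ GCm, |y2.1 i| ≤ (∑ i ∈ GCm, |v.1 i|) + n * ε' :=
          calc ∑ i ∈ GCm, |y2.1 i| ≤ ∑ i ∈ GCm, (|v.1 i| + ε') := Finset.sum_le_sum h1
            _ = (∑ i ∈ GCm, |v.1 i|) + n * ε' := by
                rw [Finset.sum_add_distrib, Finset.sum_const, nsmul_eq_mul, hn]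
        have h5 : n * ε' ≤ δ := by
          have h6 : ε' ≤ δ / (n + 1) := min_le_right _ _
          calc n * ε' ≤ n * (δ / (n + 1)) := mul_le_mul_of_nonneg_left h6 hn0
            _ ≤ δ := by
                rw [mul_comm, div_mul_eq_mul_div, div_le_iff₀ (by linarith : (0:ℝ) < n + 1)]
                nlinarith [hδ0.le]
        linarith
    -- bound for the construction
      have hgball : g ∈ Ball M := by
        intro K
        have hsplit := Finset.sum_filter_add_sum_filter_not K (fun i => i ∈ N) (fun i => |g i|)
        set KN := K.filter (fun i => i ∈ N) with hKN
        set KC := K.filter (fun i => ¬ i ∈ N) with hKC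
        have hpart1 : ∑ i ∈ KN, |g i| = ∑ i ∈ KN, |v.1 i| := by
          refine Finset.sum_congr rfl fun i hi => ?_
          rw [show g i = v.1 i from if_pos (Finset.mem_filter.1 hi).2]
        have hdisj : Disjoint KN GCm := by
          rw [Finset.disjoint_left]
          intro a haK haG
          exact (hGCmC a haG) (Finset.mem_filter.1 haK).2
        have hKNbound : ∑ i ∈ KN, |v.1 i| + (c2 - 2 * δ) ≤ 1 := by
          have := v.2 (KN ∪ GCm)
          rw [Finset.sum_union hdisj] at this
          linarith
        have hpart2 : ∑ i ∈ KC, |g i| ≤ t * S1 := by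
          have hterm : ∀ i ∈ KC, |g i| = if i ∈ FC then t * |y1.1 i| else 0 := by
            intro i hi
            have hiN : ¬ i ∈ N := (Finset.mem_filter.1 hi).2
            simp only [hg, if_neg hiN]
            split_ifs
            · rw [abs_mul, abs_of_nonneg ht0]
            · exact abs_zero
          calc ∑ i ∈ KC, |g i| = ∑ i ∈ KC, (if i ∈ FC then t * |y1.1 i| else 0) :=
                Finset.sum_congr rfl hterm
            _ = ∑ i ∈ KC.filter (fun i => i ∈ FC), t * |y1.1 i| :=
                (Finset.sum_filter _ _).symm
            _ ≤ ∑ i ∈ FC, t * |y1.1 i| := by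
                refine Finset.sum_le_sum_of_subset_of_nonneg ?_ (fun i _ _ => by positivity)
                intro a ha
                exact (Finset.mem_filter.1 ha).2
            _ = t * S1 := by rw [hS1, Finset.mul_sum]
        rw [← hsplit]
        have hfinal : t * S1 + 2 * δ ≤ c2 := by
          have hS1c2 : S1 ≤ c2 := le_trans hS1c1 hc
          rw [ht, hδ]
          nlinarith [mul_pos hm0 hS10, hS1c2, hm0.le, hS10.le]
        linarith [hpart1, hpart2, hKNbound]
      set w : ↥(Ball M) := ⟨g, hgball⟩ with hwdef
      have hwU : w ∈ U := by
        apply hFU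
        intro i hi
        show |g i - y1.1 i| < ε
        by_cases hiN : i ∈ N
        · rw [show g i = v.1 i from if_pos hiN, hvals i hiN]
          exact lt_of_lt_of_le
            (hvV i (Finset.mem_union_left _ (Finset.mem_filter.2 ⟨hi, hiN⟩))) hε'ε
        · have hiFC : i ∈ FC := Finset.mem_filter.2 ⟨hi, hiN⟩
          rw [show g i = t * y1.1 i from by simp only [hg, if_neg hiN, if_pos hiFC]]
          have heq : t * y1.1 i - y1.1 i = -((1 - t) * y1.1 i) := by ring
          rw [heq, abs_neg, abs_mul, abs_of_nonneg (by linarith : (0:ℝ) ≤ 1 - t)]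
          have h7 : (1 - t) * |y1.1 i| ≤ (1 - t) * 1 :=
            mul_le_mul_of_nonneg_left (ball_abs_le_one y1 i) (by linarith)
          have h8 : (1 : ℝ) - t = m / 2 := by rw [ht]; ring
          rw [h8] at h7 ⊢
          calc m / 2 * |y1.1 i| ≤ m / 2 * 1 := h7
            _ < ε := by linarith
      refine ⟨w, hwU, ?_⟩
      apply Subtype.ext
      funext i
      show g i.1 = v.1 i.1
      exact if_pos i.2
end

section
/- Let $g : K \to L$ be a continuous surjection between topological spaces satisfying: there exist $\varpi \in L$ and $m \in g^{-1}(\varpi)$ such that $|g^{-1}(y)| = 1$ for all $y \neq \varpi$, and in the fiber preorder on $g^{-1}(\varpi)$ one has $m < t$ for all $t \in g^{-1}(\varpi) \setminus \{m\}$ and $t \sim s$ for all $t, s \in g^{-1}(\varpi) \setminus \{m\}$. Let $g^n : K^n \to L^n$ be the $n$-fold product map, let $x = (x_1,\dots,x_n) \in L^n$, and set $R(x) = \{i : x_i = \varpi\}$ and, for $y \in (g^n)^{-1}(x)$, $S(y) = \{i \in R(x) : y_i \neq m\}$. Then for $y, z \in (g^n)^{-1}(x)$: if $S(z) \supseteq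 S(y)$ then $y \leq z$ in the fiber preorder of $g^n$. -/
theorem stmt13 {K L : Type*} [TopologicalSpace K] [TopologicalSpace L]
    (g : K → L) (hg : Continuous g) (hsurj : Function.Surjective g)
    (ϖ : L) (m : K) (hm : g m = ϖ)
    (hone : ∀ y : L, y ≠ ϖ → ∃! z : K, g z = y)
    (hlt : ∀ t : K, g t = ϖ → t ≠ m → FiberLe g m t ∧ ¬ FiberLe g t m)
    (hsim : ∀ t s : K, g t = ϖ → g s = ϖ → t ≠ m → s ≠ m → FiberLe g t s)
    (n : ℕ) (x : Fin n → L) (y z : Fin n → K)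
    (hy : ∀ i, g (y i) = x i) (hz : ∀ i, g (z i) = x i)
    (hS : ∀ i, x i = ϖ → y i ≠ m → z i ≠ m) :
    FiberLe (fun (w : Fin n → K) (i : Fin n) => g (w i)) y z := by
  have hcoord : ∀ i, FiberLe g (y i) (z i) := by
    intro i
    by_cases hx : x i = ϖ
    · by_cases hyi : y i = m
      · by_cases hzi : z i = m
        · intro U hU hmem
          exact ⟨U, hU, by rw [hzi, ← hyi]; exact hmem, subset_rfl⟩
        · have h := (hlt (z i) (by rw [hz i, hx]) hzi).1
          rw [← hyi] at h; exact h
      · exact hsim _ _ (by rw [hy i, hx]) (by rw [hz i, hx]) hyi (hS i hx hyi)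
    · have hyz : y i = z i := by
        obtain ⟨w, hw, huniq⟩ := hone (x i) hx
        rw [huniq _ (hy i), huniq _ (hz i)]
      intro U hU hmem
      exact ⟨U, hU, hyz ▸ hmem, subset_rfl⟩
  intro U hU hyU
  obtain ⟨I, u, hu, hsub⟩ := isOpen_pi_iff.mp hU y hyU
  set U' : Fin n → Set K := fun i => if i ∈ I then u i else Set.univ with hU'
  have hU'open : ∀ i, IsOpen (U' i) := by
    intro i; simp only [hU']; split
    · exact (hu i ‹_›).1
    · exact isOpen_univ
  have hyU' : ∀ i, y i ∈ U' i := by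
    intro i; simp only [hU']; split
    · exact (hu i ‹_›).2
    · trivial
  choose V hVopen hzV hVsub using fun i => hcoord i (U' i) (hU'open i) (hyU' i)
  refine ⟨Set.pi Set.univ V, isOpen_set_pi Set.finite_univ (fun i _ => hVopen i),
    fun i _ => hzV i, ?_⟩
  rintro w ⟨v, hv, rfl⟩
  have hex : ∀ i, ∃ a ∈ U' i, g a = g (v i) := by
    intro i
    obtain ⟨a, ha, hga⟩ := hVsub i ⟨v i, hv i trivial, rfl⟩
    exact ⟨a, ha, hga⟩
  choose a ha hga using hex
  refine ⟨a, hsub ?_, funext hga⟩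
  intro i hi
  simpa only [hU', if_pos (Finset.mem_coe.mp hi)] using ha i
end

section
/- Let $g : K \to L$ be a continuous surjection between compact metrizable spaces and $f = P(g) : P(K) \to P(L)$ the pushforward map on Borel probability measures. Let $U_1, \dots, U_n$ be pairwise disjoint closed subsets of $K$ and $c_1, \dots, c_n \geq 0$. Then $f(\{\nu : \nu(U_i) > c_i \ \forall i\}) = \{\lambda \in P(L) : \lambda(g(\bigcup_{i \in A} U_i)) > \sum_{i \in A} c_i \text{ for every nonempty } A \subseteq \{1,\dots,n\}\}$. -/
/-!
Let `X_B`, for `B ⊆ {1, …, n}`, be the set of points of `L` lying in `g(U_i)` exactly for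
`i ∈ B`. Then `λ(g(⋃_{i ∈ A} U_i))` is the total mass of the atoms `X_B` with `A ∩ B ≠ ∅`, so
the hypothesis is a strict Hall condition for the demands `c_i` against the supplies `λ(X_B)`,
the atom `X_B` being allowed to serve the indices in `B`. Scaling, rounding and Hall's marriage
theorem split each supply into parts `w_{B,i} λ(X_B)`, `i ∈ B`, with `∑_B w_{B,i} λ(X_B) > c_i`.
A measurable section `s_i` of `g` over `g(U_i)` carries the part `w_{B,i} λ|X_B` into `U_i`, and a
global section carries the remaining mass, so the resulting `ν` pushes forward to `λ`. Conversely,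
by disjointness `∑_{i ∈ A} ν(U_i) = ν(⋃_{i ∈ A} U_i) ≤ λ(g(⋃_{i ∈ A} U_i))`.

Measurable sections come from a greedy construction: enumerate closed sets `V_k` that are
arbitrarily small around every point, and at step `k` cut the fibre over `y` down to `V_k`
whenever it still meets it. The surviving pieces shrink to a point `s(y)`, and `s` is a pointwise
limit of maps that depend on `y` only through the finite set of indices kept so far.
-/

open MeasureTheory Filter Topology Finset
open scoped NNReal ENNReal

lemma exists_nat_mul_add_lt {κ : Type*} [Finite κ] {a b : κ → ℝ≥0} (h : ∀ j, a j < b j)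
    (c : ℝ≥0) : ∃ N : ℕ, 0 < N ∧ ∀ j, N * a j + c < N * b j := by
  have key (j : κ) : ∀ᶠ N : ℕ in atTop, (N : ℝ≥0) * a j + c < N * b j := by
    have : Tendsto (fun N : ℕ => (N : ℝ≥0) * (b j - a j)) atTop atTop :=
      tendsto_natCast_atTop_atTop.atTop_mul_const (tsub_pos_of_lt (h j))
    filter_upwards [this.eventually_gt_atTop c] with N hN
    calc N * a j + c < N * a j + N * (b j - a j) := by gcongr
      _ = N * b j := by rw [← mul_add, add_tsub_cancel_of_le (h j).le]
  exact ((eventually_gt_atTop 0).and (eventually_all.2 key)).exists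

section Hall

variable {ι β : Type*} [Fintype ι] [Fintype β] (r : ι → β → Prop) [DecidableRel r]

theorem exists_nat_transport_of_hall (D : ι → ℕ) (M : β → ℕ)
    (h : ∀ A : Finset ι, ∑ i ∈ A, D i ≤ ∑ b with ∃ i ∈ A, r i b, M b) :
    ∃ T : β → ι → ℕ, (∀ b i, T b i ≠ 0 → r i b) ∧ (∀ b, ∑ i, T b i ≤ M b) ∧
      ∀ i, ∑ b, T b i = D i := by
  classical
  obtain ⟨f, hf_inj, hf⟩ := (Fintype.all_card_le_filter_rel_iff_exists_injective
    (fun (x : Σ i, Fin (D i)) (y : Σ b, Fin (M b)) => r x.1 y.1)).1 fun S => by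
      calc #S ≤ #((S.image Sigma.fst).sigma fun i => (univ : Finset (Fin (D i)))) :=
            card_le_card fun x hx => by simpa using ⟨x.2, hx⟩
        _ ≤ #((univ.filter fun b => ∃ i ∈ S.image Sigma.fst, r i b).sigma
              fun b => (univ : Finset (Fin (M b)))) := by
            simpa only [card_sigma, card_univ, Fintype.card_fin] using h (S.image Sigma.fst)
        _ = #{y : Σ b, Fin (M b) | ∃ x ∈ S, r x.1 y.1} := by
            congr 1; ext y; simp
  refine ⟨fun b i => #{k | (f ⟨i, k⟩).1 = b}, fun b i hbi => ?_, fun b => ?_, fun i => ?_⟩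
  · obtain ⟨k, hk⟩ := card_ne_zero.1 hbi
    simpa [(mem_filter.1 hk).2] using hf ⟨i, k⟩
  · calc ∑ i, #{k | (f ⟨i, k⟩).1 = b} = #{x | (f x).1 = b} := by
          simp only [card_filter, Fintype.sum_sigma]
      _ ≤ #(({b} : Finset β).sigma fun b => (univ : Finset (Fin (M b)))) :=
          card_le_card_of_injOn f (fun x hx => by simpa using (mem_filter.1 hx).2)
            hf_inj.injOn
      _ = M b := by simp
  · simpa using (card_eq_sum_card_fiberwise (f := fun k => (f ⟨i, k⟩).1) (s := univ)
      (t := univ) fun _ _ => mem_univ _).symm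

theorem exists_weights_of_sum_lt (d : ι → ℝ≥0) (m : β → ℝ≥0)
    (h : ∀ A : Finset ι, A.Nonempty → ∑ i ∈ A, d i < ∑ b with ∃ i ∈ A, r i b, m b) :
    ∃ w : β → ι → ℝ≥0, (∀ b i, w b i ≠ 0 → r i b) ∧ (∀ b, ∑ i, w b i ≤ 1) ∧
      ∀ i, d i < ∑ b, w b i * m b := by
  obtain ⟨N, hN, hNA⟩ := exists_nat_mul_add_lt (κ := {A : Finset ι // A.Nonempty})
    (fun A => h A A.2) (Fintype.card ι + Fintype.card β)
  -- round demands up and supplies down; the slack `card ι + card β` absorbs the rounding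
  set D : ι → ℕ := fun i => ⌊N * d i⌋₊ + 1
  set M : β → ℕ := fun b => ⌊N * m b⌋₊
  obtain ⟨T, hTr, hTM, hTD⟩ := exists_nat_transport_of_hall r D M fun A => by
    rcases A.eq_empty_or_nonempty with rfl | hA
    · simp
    have hD : (∑ i ∈ A, D i : ℝ≥0) ≤ N * ∑ i ∈ A, d i + Fintype.card ι := by
      simp only [D, Nat.cast_add, Nat.cast_one, sum_add_distrib, mul_sum,
        sum_const, nsmul_one]
      gcongr
      · exact Nat.floor_le zero_le
      · exact card_le_univ A
    have hM : N * ∑ b with ∃ i ∈ A, r i b, m b ≤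
        (∑ b with ∃ i ∈ A, r i b, M b : ℝ≥0) + Fintype.card β := by
      calc N * ∑ b with ∃ i ∈ A, r i b, m b
          ≤ ∑ b with ∃ i ∈ A, r i b, ((M b : ℝ≥0) + 1) := by
            rw [mul_sum]; exact sum_le_sum fun b _ => (Nat.lt_floor_add_one _).le
        _ ≤ (∑ b with ∃ i ∈ A, r i b, M b : ℝ≥0) + Fintype.card β := by
            rw [sum_add_distrib, sum_const, nsmul_one]
            gcongr
            exact card_le_univ _
    have hlt : (∑ i ∈ A, D i : ℝ≥0) + Fintype.card β <
        (∑ b with ∃ i ∈ A, r i b, M b : ℝ≥0) + Fintype.card β := calc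
      _ ≤ N * ∑ i ∈ A, d i + (Fintype.card ι + Fintype.card β) := by
        rw [← add_assoc]; gcongr
      _ < N * ∑ b with ∃ i ∈ A, r i b, m b := hNA ⟨A, hA⟩
      _ ≤ _ := hM
    exact_mod_cast (lt_of_add_lt_add_right hlt).le
  have hNpos : (0 : ℝ≥0) < N := by exact_mod_cast hN
  refine ⟨fun b i => T b i / M b, fun b i hw => hTr b i fun hT => by simp [hT] at hw,
    fun b => ?_, fun i => ?_⟩
  · rw [← sum_div]
    exact div_le_one_of_le₀ (by exact_mod_cast hTM b) zero_le
  calc d i < D i / N := by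
        rw [lt_div_iff₀ hNpos, mul_comm]
        exact_mod_cast Nat.lt_floor_add_one _
    _ = ∑ b, (T b i : ℝ≥0) / N := by rw [← hTD i, Nat.cast_sum, sum_div]
    _ ≤ ∑ b, (T b i : ℝ≥0) / M b * m b := sum_le_sum fun b _ => by
        rcases Nat.eq_zero_or_pos (T b i) with hT | hT
        · simp [hT]
        have hMpos : (0 : ℝ≥0) < M b := by
          exact_mod_cast hT.trans_le ((single_le_sum (by simp) (mem_univ i)).trans (hTM b))
        rw [div_mul_eq_mul_div, div_le_div_iff₀ hNpos hMpos]
        calc (T b i : ℝ≥0) * M b ≤ T b i * (N * m b) := by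
              gcongr; exact Nat.floor_le zero_le
          _ = T b i * m b * N := by ring

end Hall

section MeasurableSection

theorem exists_seq_isClosed_mem_subset_of_mem_nhds (K : Type*) [TopologicalSpace K]
    [SecondCountableTopology K] [RegularSpace K] :
    ∃ V : ℕ → Set K, (∀ k, IsClosed (V k)) ∧ ∀ x, ∀ U ∈ 𝓝 x, ∃ k, x ∈ V k ∧ V k ⊆ U := by
  obtain ⟨b, hbc, -, hb⟩ := TopologicalSpace.exists_countable_basis K
  refine ⟨fun k => closure (Set.enumerateCountable hbc ∅ k), fun k => isClosed_closure,
    fun x U hU => ?_⟩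
  obtain ⟨W, hW, hWc, hWU⟩ := exists_mem_nhds_isClosed_subset hU
  obtain ⟨B, hB, hxB, hBW⟩ := hb.mem_nhds_iff.1 hW
  obtain ⟨k, rfl⟩ := Set.subset_range_enumerate hbc ∅ hB
  exact ⟨k, subset_closure hxB, (closure_minimal hBW hWc).trans hWU⟩

variable {K L : Type*}

def cutDown (C : Set K) (V : ℕ → Set K) (J : Finset ℕ) : Set K := C ∩ ⋂ j ∈ J, V j

open Classical in
noncomputable def greedyIndex (g : K → L) (C : Set K) (V : ℕ → Set K) (y : L) : ℕ → Finset ℕ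
  | 0 => ∅
  | k + 1 =>
    if y ∈ g '' (cutDown C V (greedyIndex g C V y k) ∩ V k) then insert k (greedyIndex g C V y k)
    else greedyIndex g C V y k

variable {g : K → L} {C : Set K} {V : ℕ → Set K} {y : L}

lemma cutDown_empty : cutDown C V ∅ = C := by simp [cutDown]

lemma cutDown_insert (k : ℕ) (J : Finset ℕ) :
    cutDown C V (insert k J) = cutDown C V J ∩ V k := by
  rw [cutDown, cutDown, Finset.set_biInter_insert, Set.inter_left_comm, Set.inter_comm]

lemma cutDown_anti : Antitone (cutDown C V) := fun _ _ hJ =>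
  Set.inter_subset_inter_right _ (Set.biInter_subset_biInter_left hJ)

lemma cutDown_subset_of_mem {k : ℕ} {J : Finset ℕ} (hk : k ∈ J) : cutDown C V J ⊆ V k :=
  fun _ hx => Set.mem_iInter₂.1 hx.2 k hk

lemma isClosed_cutDown [TopologicalSpace K] (hC : IsClosed C) (hV : ∀ k, IsClosed (V k))
    (J : Finset ℕ) : IsClosed (cutDown C V J) :=
  hC.inter (isClosed_biInter fun j _ => hV j)

lemma greedyIndex_mono : Monotone (greedyIndex g C V y) :=
  monotone_nat_of_le_succ fun k => by
    simp only [greedyIndex]; split_ifs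
    exacts [Finset.subset_insert _ _, le_rfl]

lemma mem_image_cutDown_greedyIndex (hy : y ∈ g '' C) (k : ℕ) :
    y ∈ g '' cutDown C V (greedyIndex g C V y k) := by
  induction k with
  | zero => simpa [greedyIndex, cutDown_empty] using hy
  | succ k ih =>
    simp only [greedyIndex]; split_ifs with h
    exacts [cutDown_insert (C := C) (V := V) k _ ▸ h, ih]

lemma greedyIndex_eq_empty (hy : y ∉ g '' C) (k : ℕ) : greedyIndex g C V y k = ∅ := by
  induction k with
  | zero => rfl
  | succ k ih =>
    rw [greedyIndex, if_neg fun h => hy (Set.image_mono (fun x hx => hx.1.1) h), ih]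

lemma mem_greedyIndex_succ {k : ℕ} {x : K} (hx : x ∈ cutDown C V (greedyIndex g C V y k))
    (hxk : x ∈ V k) (hgx : g x = y) : k ∈ greedyIndex g C V y (k + 1) := by
  rw [greedyIndex, if_pos ⟨x, ⟨hx, hxk⟩, hgx⟩]
  exact Finset.mem_insert_self _ _

lemma measurable_greedyIndex [TopologicalSpace K] [CompactSpace K] [TopologicalSpace L]
    [T2Space L] [MeasurableSpace L] [OpensMeasurableSpace L] (hg : Continuous g)
    (hC : IsClosed C) (hV : ∀ k, IsClosed (V k)) (k : ℕ) :
    Measurable fun y => greedyIndex g C V y k := by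
  classical
  induction k with
  | zero => exact measurable_const
  | succ k ih =>
    have hstep : Measurable fun p : L × Finset ℕ =>
        if p.1 ∈ g '' (cutDown C V p.2 ∩ V k) then insert k p.2 else p.2 :=
      measurable_from_prod_countable_left fun J => by
        dsimp only
        exact Measurable.ite ((((isClosed_cutDown hC hV J).inter (hV k)).isCompact.image
          hg).isClosed.measurableSet) measurable_const measurable_const
    convert hstep.comp (measurable_id.prodMk ih) using 2 with y
    rw [greedyIndex]
    rfl

theorem Continuous.exists_measurable_section [TopologicalSpace K] [CompactSpace K]
    [TopologicalSpace.MetrizableSpace K] [MeasurableSpace K] [BorelSpace K] [Nonempty K]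
    [TopologicalSpace L] [T2Space L] [MeasurableSpace L] [BorelSpace L] (hg : Continuous g)
    (hC : IsClosed C) :
    ∃ s : L → K, Measurable s ∧ ∀ y ∈ g '' C, s y ∈ C ∧ g (s y) = y := by
  obtain ⟨V, hVc, hV⟩ := exists_seq_isClosed_mem_subset_of_mem_nhds K
  let u (k : ℕ) (y : L) : K := Classical.epsilon (· ∈ cutDown C V (greedyIndex g C V y k))
  have hu_meas (k : ℕ) : Measurable (u k) :=
    (measurable_of_countable fun J => Classical.epsilon (· ∈ cutDown C V J)).comp
      (measurable_greedyIndex hg hC hVc k)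
  have key (y : L) : ∃ x, Tendsto (u · y) atTop (𝓝 x) ∧ (y ∈ g '' C → x ∈ C ∧ g x = y) := by
    by_cases hy : y ∈ g '' C
    swap
    · exact ⟨u 0 y, by simp [u, greedyIndex_eq_empty hy], fun h => absurd h hy⟩
    have hu_mem (k : ℕ) : u k y ∈ cutDown C V (greedyIndex g C V y k) :=
      Classical.epsilon_spec (Set.image_nonempty.1 ⟨y, mem_image_cutDown_greedyIndex hy k⟩)
    obtain ⟨x, hx⟩ := IsCompact.nonempty_iInter_of_sequence_nonempty_isCompact_isClosed
      (fun k => cutDown C V (greedyIndex g C V y k) ∩ g ⁻¹' {y})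
      (fun k => Set.inter_subset_inter_left _ (cutDown_anti (greedyIndex_mono (Nat.le_succ k))))
      (mem_image_cutDown_greedyIndex hy)
      ((isClosed_cutDown hC hVc _).inter (isClosed_singleton.preimage hg)).isCompact
      (fun k => (isClosed_cutDown hC hVc _).inter (isClosed_singleton.preimage hg))
    simp only [Set.mem_iInter, Set.mem_inter_iff, Set.mem_preimage, Set.mem_singleton_iff] at hx
    refine ⟨x, tendsto_atTop'.2 fun U hU => ?_, fun _ => ⟨(hx 0).1.1, (hx 0).2⟩⟩
    -- once `x ∈ V k`, step `k` keeps `V k`, so every later `u j y` lies in `V k`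
    obtain ⟨k, hxk, hkU⟩ := hV x U hU
    have hk := mem_greedyIndex_succ (hx k).1 hxk (hx k).2
    exact ⟨k + 1, fun j hj => hkU (cutDown_subset_of_mem (greedyIndex_mono hj hk) (hu_mem j))⟩
  choose s hs_lim hs using key
  exact ⟨s, measurable_of_tendsto_metrizable hu_meas (tendsto_pi_nhds.2 hs_lim), hs⟩

end MeasurableSection

section Lift

variable {K L β ι : Type*} [MeasurableSpace K] [MeasurableSpace L] {g : K → L}

lemma map_map_eq_of_ae_section (hg : Measurable g) {s : L → K} (hs : Measurable s)
    {μ : Measure L} (h : ∀ᵐ y ∂μ, g (s y) = y) : (μ.map s).map g = μ := by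
  rw [Measure.map_map hg hs, Measure.map_congr (f := g ∘ s) (g := id) h, Measure.map_id]

lemma map_sum_smul_map_eq_of_ae_section [Fintype ι] (hg : Measurable g) {μ : Measure L}
    {s : ι → L → K} (hs : ∀ i, Measurable (s i)) {p : ι → ℝ≥0∞} (hp : ∑ i, p i = 1)
    (h : ∀ i, p i ≠ 0 → ∀ᵐ y ∂μ, g (s i y) = y) :
    (∑ i, p i • μ.map (s i)).map g = μ := by
  rw [Measure.map_finset_sum hg.aemeasurable]
  calc ∑ i, (p i • μ.map (s i)).map g = ∑ i, p i • μ := sum_congr rfl fun i _ => by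
        rw [Measure.map_smul]
        rcases eq_or_ne (p i) 0 with h0 | h0
        · simp [h0]
        · rw [map_map_eq_of_ae_section hg (hs i) (h i h0)]
    _ = μ := by rw [← sum_smul, hp, one_smul]

lemma sum_restrict_preimage_singleton [Fintype β] [MeasurableSpace β]
    [MeasurableSingletonClass β] {τ : L → β} (hτ : Measurable τ) (μ : Measure L) :
    ∑ b, μ.restrict (τ ⁻¹' {b}) = μ := by
  ext S hS
  calc (∑ b, μ.restrict (τ ⁻¹' {b})) S = ∑ b, μ.restrict S (τ ⁻¹' {b}) := by
        simp only [Measure.coe_finsetSum, Finset.sum_apply]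
        refine sum_congr rfl fun b _ => ?_
        rw [Measure.restrict_apply hS, Measure.restrict_apply (hτ (measurableSet_singleton b)),
          Set.inter_comm]
    _ = μ S := by
        rw [sum_measure_preimage_singleton _ fun b _ => hτ (measurableSet_singleton b)]
        simp

theorem exists_map_eq_of_weighted_sections [Fintype ι] [Fintype β] [MeasurableSpace β]
    [MeasurableSingletonClass β] (hg : Measurable g) {τ : L → β} (hτ : Measurable τ)
    (μ : Measure L) {U : ι → Set K} (hU : ∀ i, MeasurableSet (U i)) {w : β → ι → ℝ≥0}
    (hw : ∀ b, ∑ i, w b i ≤ 1) {s : ι → L → K} (hs : ∀ i, Measurable (s i))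
    (hsU : ∀ b i, w b i ≠ 0 → ∀ y ∈ τ ⁻¹' {b}, s i y ∈ U i ∧ g (s i y) = y)
    {s₀ : L → K} (hs₀ : Measurable s₀) (hgs₀ : ∀ y, g (s₀ y) = y) :
    ∃ ν : Measure K, ν.map g = μ ∧ ∀ i, ∑ b, w b i * μ (τ ⁻¹' {b}) ≤ ν (U i) := by
  -- on the atom `τ ⁻¹' {b}`, use the section `s i` with weight `w b i`, and `s₀` for the rest
  let σ : Option ι → L → K := fun j => j.elim s₀ s
  let p (b : β) : Option ι → ℝ≥0∞ := fun j => j.elim (1 - ∑ i, (w b i : ℝ≥0∞)) fun i => w b i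
  have hσ (j : Option ι) : Measurable (σ j) := by cases j; exacts [hs₀, hs _]
  refine ⟨∑ b, ∑ j, p b j • (μ.restrict (τ ⁻¹' {b})).map (σ j), ?_, fun i => ?_⟩
  · rw [Measure.map_finset_sum hg.aemeasurable]
    conv_rhs => rw [← sum_restrict_preimage_singleton hτ μ]
    refine sum_congr rfl fun b _ => map_sum_smul_map_eq_of_ae_section hg hσ ?_ ?_
    · rw [Fintype.sum_option]
      exact tsub_add_cancel_of_le (by exact_mod_cast hw b)
    · rintro (_ | i) hp
      · exact ae_of_all _ hgs₀
      · exact ae_restrict_of_forall_mem (hτ (measurableSet_singleton b)) fun y hy =>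
          (hsU b i (by simpa [p] using hp) y hy).2
  · simp only [Measure.coe_finsetSum, Finset.sum_apply, Measure.smul_apply, smul_eq_mul]
    refine sum_le_sum fun b _ => ?_
    calc (w b i : ℝ≥0∞) * μ (τ ⁻¹' {b})
        ≤ w b i * (μ.restrict (τ ⁻¹' {b})).map (s i) (U i) := by
          rcases eq_or_ne (w b i) 0 with h0 | h0
          · simp [h0]
          rw [Measure.map_apply (hs i) (hU i), Measure.restrict_apply (hs i (hU i))]
          gcongr
          exact fun y hy => ⟨(hsU b i h0 y hy).1, hy⟩
      _ ≤ ∑ j, p b j * (μ.restrict (τ ⁻¹' {b})).map (σ j) (U i) :=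
          single_le_sum (f := fun j => p b j * (μ.restrict (τ ⁻¹' {b})).map (σ j) (U i))
            (fun _ _ => zero_le) (mem_univ (some i))

end Lift

theorem exists_map_eq_of_sum_lt_measure_image {K L ι : Type*} [TopologicalSpace K]
    [CompactSpace K] [TopologicalSpace.MetrizableSpace K] [MeasurableSpace K] [BorelSpace K]
    [Nonempty K] [TopologicalSpace L] [T2Space L] [MeasurableSpace L] [BorelSpace L] [Fintype ι]
    {g : K → L} (hg : Continuous g) (hsurj : Function.Surjective g) {U : ι → Set K}
    (hU : ∀ i, IsClosed (U i)) (c : ι → ℝ≥0) (μ : Measure L) [IsFiniteMeasure μ]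
    (h : ∀ A : Finset ι, A.Nonempty → ∑ i ∈ A, (c i : ℝ≥0∞) < μ (g '' ⋃ i ∈ A, U i)) :
    ∃ ν : Measure K, ν.map g = μ ∧ ∀ i, (c i : ℝ≥0∞) < ν (U i) := by
  classical
  -- the fibres of `τ` are the atoms `X_B`
  let τ (y : L) : Finset ι := {i | y ∈ g '' U i}
  have hτ : Measurable τ := measurable_finset_iff.2 fun i => by
    simpa [τ] using ((hU i).isCompact.image hg).isClosed.measurableSet.mem
  have hμ (b : Finset ι) : ((μ (τ ⁻¹' {b})).toNNReal : ℝ≥0∞) = μ (τ ⁻¹' {b}) :=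
    ENNReal.coe_toNNReal (measure_ne_top _ _)
  have hμA (A : Finset ι) : μ (g '' ⋃ i ∈ A, U i) = ∑ b with ∃ i ∈ A, i ∈ b, μ (τ ⁻¹' {b}) := by
    rw [sum_measure_preimage_singleton _ fun b _ => hτ (measurableSet_singleton b)]
    congr 1; ext y; simp [τ, Set.image_iUnion₂]
  obtain ⟨w, hw_mem, hw_sum, hw_lt⟩ := exists_weights_of_sum_lt (fun i b => i ∈ b) c
    (fun b => (μ (τ ⁻¹' {b})).toNNReal) fun A hA => by
      have := h A hA
      rw [hμA, ← sum_congr rfl fun b _ => hμ b] at this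
      exact_mod_cast this
  choose s hs_meas hs using fun i => hg.exists_measurable_section (hU i)
  obtain ⟨s₀, hs₀_meas, hs₀⟩ := hg.exists_measurable_section isClosed_univ
  obtain ⟨ν, hν, hνU⟩ := exists_map_eq_of_weighted_sections hg.measurable hτ μ
    (fun i => (hU i).measurableSet) hw_sum hs_meas
    (fun b i hw y (hy : τ y = b) => hs i y (by subst hy; simpa [τ] using hw_mem _ i hw))
    hs₀_meas
    (fun y => (hs₀ y (by rw [Set.image_univ_of_surjective hsurj]; trivial)).2)
  refine ⟨ν, hν, fun i => (hνU i).trans_lt' ?_⟩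
  have := ENNReal.coe_lt_coe.2 (hw_lt i)
  push_cast at this
  simpa only [hμ] using this

theorem stmt17_general {K L : Type*}
    [TopologicalSpace K] [CompactSpace K]
    [TopologicalSpace.MetrizableSpace K] [MeasurableSpace K] [BorelSpace K]
    [TopologicalSpace L] [T2Space L]
    [MeasurableSpace L] [BorelSpace L]
    (g : K → L) (hg : Continuous g) (hsurj : Function.Surjective g)
    (n : ℕ) (U : Fin n → Set K) (hU : ∀ i, IsClosed (U i))
    (hdisj : Pairwise (Function.onFun Disjoint U))
    (c : Fin n → ℝ≥0)
    (lam : Measure L) [IsProbabilityMeasure lam] :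
    (∀ A : Finset (Fin n), A.Nonempty →
        (∑ i ∈ A, (c i : ℝ≥0∞)) < lam (g '' ⋃ i ∈ A, U i)) ↔
      ∃ ν : Measure K, IsProbabilityMeasure ν ∧
        (∀ i, (c i : ℝ≥0∞) < ν (U i)) ∧ lam = ν.map g := by
  constructor
  · intro h
    have : Nonempty K := (nonempty_of_isProbabilityMeasure lam).map fun y => (hsurj y).choose
    obtain ⟨ν, hν, hνU⟩ := exists_map_eq_of_sum_lt_measure_image hg hsurj hU c lam h
    have : IsProbabilityMeasure (ν.map g) := hν ▸ ‹_›
    exact ⟨ν, Measure.isProbabilityMeasure_of_map g, hνU, hν.symm⟩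
  · rintro ⟨ν, -, hνU, rfl⟩ A hA
    calc ∑ i ∈ A, (c i : ℝ≥0∞) < ∑ i ∈ A, ν (U i) :=
          ENNReal.sum_lt_sum_of_nonempty hA fun i _ => hνU i
      _ = ν (⋃ i ∈ A, U i) := (measure_biUnion_finset (fun i _ j _ hij => hdisj hij)
          fun i _ => (hU i).measurableSet).symm
      _ ≤ ν.map g (g '' ⋃ i ∈ A, U i) := Measure.le_map_apply_image hg.aemeasurable _

theorem stmt17 {K L : Type*}
    [TopologicalSpace K] [CompactSpace K] [T2Space K]
    [TopologicalSpace.MetrizableSpace K] [MeasurableSpace K] [BorelSpace K]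
    [TopologicalSpace L] [CompactSpace L] [T2Space L]
    [TopologicalSpace.MetrizableSpace L] [MeasurableSpace L] [BorelSpace L]
    (g : K → L) (hg : Continuous g) (hsurj : Function.Surjective g)
    (n : ℕ) (U : Fin n → Set K) (hU : ∀ i, IsClosed (U i))
    (hdisj : Pairwise (Function.onFun Disjoint U))
    (c : Fin n → ℝ≥0)
    (lam : Measure L) [IsProbabilityMeasure lam] :
    (∀ A : Finset (Fin n), A.Nonempty →
        (∑ i ∈ A, (c i : ℝ≥0∞)) < lam (g '' ⋃ i ∈ A, U i)) ↔
      ∃ ν : Measure K, IsProbabilityMeasure ν ∧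
        (∀ i, (c i : ℝ≥0∞) < ν (U i)) ∧ lam = ν.map g :=
  stmt17_general g hg hsurj n U hU hdisj c lam
end
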